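/- arXiv:2003.06130 — 3 statements merged into one kernel-verified Lean document; each statement's English description precedes it below -/
import Mathlib

section
/- Let Φ be a measurable functional calculus on (X, Σ) and let f, g : X → 𝕜 be measurable. (a) If |f| ≤ |g| pointwise, then dom(Φ(g)) ⊆ dom(Φ(f)) and ‖Φ(f)x‖ ≤ ‖Φ(g)x‖ for all x ∈ dom(Φ(g)). (c) If p(z) = Σ_{j=0}^{n} a_j z^j is a polynomial of degree n ≥ 1 over 𝕜, then Φ(p ∘ f) = Σ_{j=0}^{n} a_j Φ(f)^j (equality of partially defined operators); in particular dom(Φ(p ∘ f)) = dom(Φ(f)^n). -/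
/-!
(a) If `‖f‖ ≤ ‖g‖`, then `f = h * g` with `h = f / g` measurable and `‖h‖ ≤ 1`. By MFC3 the
operator `Φ(h)Φ(g) ⊆ Φ(f)` has domain `dom Φ(g) ∩ dom Φ(f)`, while `Φ(h)` is everywhere defined,
so `dom Φ(g) ⊆ dom Φ(f)` and `Φ(f) = Φ(h)Φ(g)` there. `Φ(h)` is a contraction: with
`s = √(1 - ‖h‖²)`, MFC2–MFC4 give `‖Φ(h)y‖² + ‖Φ(s)y‖² = ⟪Φ(‖h‖² + ‖s‖²)y, y⟫ = ‖y‖²`.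

(c) By (a) and MFC2, `‖u‖ ≤ C (1 + ‖w‖)` forces `dom Φ(w) ⊆ dom Φ(u)`, and such a bound holds
for polynomials `P`, `Q` with `deg P ≤ deg Q`, as `P = O(Q)` at infinity. Hence
`dom Φ(p ∘ f) = dom Φ(fⁿ)` and `dom Φ(fᵏ⁺¹) ⊆ dom Φ(fᵏ)`; the latter turns MFC3 into
`Φ(f)Φ(fᵏ) = Φ(fᵏ⁺¹)`, so `Φ(f)ᵏ = Φ(fᵏ)`. Finally `∑ aⱼ Φ(f)ʲ ⊆ Φ(p ∘ f)` by MFC2, and both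
sides have domain `dom Φ(f)ⁿ`.
-/

open scoped Topology

noncomputable section

/-- Composition `S ∘ T` of partially defined linear operators, with domain
`{x ∈ dom T | T x ∈ dom S}`. -/
noncomputable def LinearPMap.compP {R E : Type*} [Ring R] [AddCommGroup E] [Module R E]
    (S T : E →ₗ.[R] E) : E →ₗ.[R] E where
  domain := (S.domain.comap T.toFun).map T.domain.subtype
  toFun := S.toFun.comp <| LinearMap.codRestrict S.domain
      (T.toFun.comp (Submodule.inclusion (Submodule.map_subtype_le _ _)))
      (fun x => by
        obtain ⟨y, hy, hyx⟩ := Submodule.mem_map.mp x.2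
        have hxy : Submodule.inclusion
            (Submodule.map_subtype_le T.domain (S.domain.comap T.toFun)) x = y := by
          apply Subtype.ext
          simpa using hyx.symm
        rw [LinearMap.comp_apply, hxy]
        exact hy)

/-- A measurable functional calculus on a measurable space `X`, with values in
closed partially defined operators on a Hilbert space `H` over `𝕜`. -/
structure MeasFC (X : Type*) [MeasurableSpace X] (𝕜 : Type*) [RCLike 𝕜]
    (H : Type*) [NormedAddCommGroup H] [InnerProductSpace 𝕜 H] [CompleteSpace H] where
  ap : (X → 𝕜) → (H →ₗ.[𝕜] H)
  isClosed : ∀ f : X → 𝕜, Measurable f → (ap f).IsClosed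
  mfc1 : ap (fun _ => 1) = (LinearMap.id : H →ₗ[𝕜] H).toPMap ⊤
  mfc2_add : ∀ f g : X → 𝕜, Measurable f → Measurable g → ap f + ap g ≤ ap (f + g)
  mfc2_smul : ∀ (c : 𝕜) (f : X → 𝕜), Measurable f → c • ap f ≤ ap (fun x => c * f x)
  mfc3_le : ∀ f g : X → 𝕜, Measurable f → Measurable g → (ap f).compP (ap g) ≤ ap (f * g)
  mfc3_dom : ∀ f g : X → 𝕜, Measurable f → Measurable g →
      ((ap f).compP (ap g)).domain = (ap g).domain ⊓ (ap (f * g)).domain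
  mfc4_dom : ∀ f : X → 𝕜, Measurable f → (∃ C, ∀ x, ‖f x‖ ≤ C) → (ap f).domain = ⊤
  mfc4_cont : ∀ f : X → 𝕜, Measurable f → (∃ C, ∀ x, ‖f x‖ ≤ C) →
      Continuous fun x : (ap f).domain => ap f x
  mfc4_star : ∀ f : X → 𝕜, Measurable f → (∃ C, ∀ x, ‖f x‖ ≤ C) →
      (ap f).adjoint = ap (fun x => starRingEnd 𝕜 (f x))
  mfc5 : ∀ (f : ℕ → X → 𝕜) (g : X → 𝕜), (∀ n, Measurable (f n)) → Measurable g →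
      (∃ C, ∀ n x, ‖f n x‖ ≤ C) →
      (∀ x, Filter.Tendsto (fun n => f n x) Filter.atTop (𝓝 (g x))) →
      ∀ (x y : H) (hn : ∀ n, x ∈ (ap (f n)).domain) (hg : x ∈ (ap g).domain),
        Filter.Tendsto (fun n => (inner 𝕜 (ap (f n) ⟨x, hn n⟩) y : 𝕜)) Filter.atTop
          (𝓝 (inner 𝕜 (ap g ⟨x, hg⟩) y))

/-- `B` is a `Φ`-null set: `Φ(𝟏_B) = 0`. -/
def MeasFC.IsNull {X : Type*} [MeasurableSpace X] {𝕜 : Type*} [RCLike 𝕜]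
    {H : Type*} [NormedAddCommGroup H] [InnerProductSpace 𝕜 H] [CompleteSpace H]
    (Φ : MeasFC X 𝕜 H) (B : Set X) : Prop :=
  Φ.ap (B.indicator fun _ => 1) = (0 : H →ₗ[𝕜] H).toPMap ⊤


/-- Iterated composition powers of a partially defined operator. -/
noncomputable def pmPow {𝕜 : Type*} [RCLike 𝕜] {H : Type*} [NormedAddCommGroup H]
    [InnerProductSpace 𝕜 H] (A : H →ₗ.[𝕜] H) : ℕ → (H →ₗ.[𝕜] H)
  | 0 => (LinearMap.id : H →ₗ[𝕜] H).toPMap ⊤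
  | n + 1 => A.compP (pmPow A n)

variable {𝕜 : Type*} [RCLike 𝕜] {X : Type*} [MeasurableSpace X]
  {H : Type*} [NormedAddCommGroup H] [InnerProductSpace 𝕜 H] [CompleteSpace H]

namespace LinearPMap

variable {R E F : Type*} [Ring R] [AddCommGroup E] [Module R E] [AddCommGroup F] [Module R F]

theorem mem_compP_domain {S T : E →ₗ.[R] E} {x : E} :
    x ∈ (S.compP T).domain ↔ ∃ hx : x ∈ T.domain, T ⟨x, hx⟩ ∈ S.domain := by
  constructor
  · rintro ⟨y, hy, rfl⟩
    exact ⟨y.2, hy⟩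
  · rintro ⟨hx, hTx⟩
    exact ⟨⟨x, hx⟩, hTx, rfl⟩

theorem compP_domain_le (S T : E →ₗ.[R] E) : (S.compP T).domain ≤ T.domain :=
  fun _ hx => (mem_compP_domain.1 hx).1

theorem compP_domain_of_domain_eq_top {S : E →ₗ.[R] E} (hS : S.domain = ⊤) (T : E →ₗ.[R] E) :
    (S.compP T).domain = T.domain :=
  le_antisymm (compP_domain_le S T) fun _ hx => mem_compP_domain.2 ⟨hx, hS ▸ trivial⟩

theorem add_le_add {T₁ T₂ U₁ U₂ : E →ₗ.[R] F} (h₁ : T₁ ≤ U₁) (h₂ : T₂ ≤ U₂) :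
    T₁ + T₂ ≤ U₁ + U₂ :=
  ⟨inf_le_inf h₁.1 h₂.1, fun _ _ hxy => congrArg₂ (· + ·) (h₁.2 hxy) (h₂.2 hxy)⟩

end LinearPMap

section pmPow

variable {K : Type*} [RCLike K] {E : Type*} [NormedAddCommGroup E] [InnerProductSpace K E]

theorem pmPow_succ_domain_le (A : E →ₗ.[K] E) (n : ℕ) :
    (pmPow A (n + 1)).domain ≤ (pmPow A n).domain :=
  A.compP_domain_le _

theorem domain_sum_range_smul_pmPow (A : E →ₗ.[K] E) (a : ℕ → K) (n : ℕ) :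
    (∑ j ∈ Finset.range (n + 1), a j • pmPow A j).domain = (pmPow A n).domain := by
  induction n with
  | zero => rw [Finset.sum_range_one, LinearPMap.smul_domain]
  | succ n ih =>
    rw [Finset.sum_range_succ, LinearPMap.add_domain, ih, LinearPMap.smul_domain]
    exact inf_eq_right.2 (pmPow_succ_domain_le A n)

end pmPow

open Bornology Asymptotics in
theorem exists_norm_le_mul_one_add_of_isBigO {α E F : Type*} [NormedAddCommGroup α]
    [ProperSpace α] [NormedAddCommGroup E] [NormedAddCommGroup F] {u : α → E} {w : α → F}
    (hu : Continuous u) (h : u =O[cobounded α] w) :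
    ∃ C, 0 ≤ C ∧ ∀ z, ‖u z‖ ≤ C * (1 + ‖w z‖) := by
  obtain ⟨c, hc, hcw⟩ := h.exists_pos
  obtain ⟨r, -, hr⟩ := Filter.hasBasis_cobounded_norm.eventually_iff.1 hcw.bound
  obtain ⟨M, hM⟩ := (isCompact_closedBall (0 : α) r).exists_bound_of_continuousOn hu.continuousOn
  refine ⟨max c M, le_max_of_le_left hc.le, fun z => ?_⟩
  have hw : 0 ≤ ‖w z‖ := norm_nonneg _
  rcases le_or_gt r ‖z‖ with hz | hz
  · calc ‖u z‖ ≤ c * ‖w z‖ := hr hz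
      _ ≤ max c M * (1 + ‖w z‖) := by gcongr <;> bound
  · calc ‖u z‖ ≤ M := hM z (mem_closedBall_zero_iff.2 hz.le)
      _ ≤ max c M * (1 + ‖w z‖) := by nlinarith [le_max_right c M, le_max_left c M]

namespace Polynomial

variable {R : Type*} [Semiring R]

theorem coeff_sum_range_C_mul_X_pow (n : ℕ) (a : ℕ → R) (k : ℕ) :
    (∑ j ∈ Finset.range (n + 1), C (a j) * Polynomial.X ^ j).coeff k =
      if k ≤ n then a k else 0 := by
  simp

theorem degree_sum_range_C_mul_X_pow {n : ℕ} {a : ℕ → R} (ha : a n ≠ 0) :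
    (∑ j ∈ Finset.range (n + 1), C (a j) * Polynomial.X ^ j).degree = (n : WithBot ℕ) := by
  apply le_antisymm
  · refine (degree_le_iff_coeff_zero _ _).2 fun k hk => ?_
    rw [coeff_sum_range_C_mul_X_pow, if_neg (by exact_mod_cast hk.not_ge)]
  · apply le_degree_of_ne_zero
    rwa [coeff_sum_range_C_mul_X_pow, if_pos le_rfl]

end Polynomial

theorem exists_measurable_mul_eq_of_norm_le {K : Type*} [NormedDivisionRing K] [MeasurableSpace K]
    [MeasurableMul₂ K] [MeasurableInv K] {f g : X → K} (hf : Measurable f) (hg : Measurable g)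
    (hfg : ∀ x, ‖f x‖ ≤ ‖g x‖) : ∃ h : X → K, Measurable h ∧ (∀ x, ‖h x‖ ≤ 1) ∧ h * g = f := by
  refine ⟨f / g, hf.div hg, fun x => ?_, funext fun x => ?_⟩
  · rw [Pi.div_apply, norm_div]
    exact div_le_one_of_le₀ (hfg x) (norm_nonneg _)
  -- where `g` vanishes, `f / g` takes the junk value `0`, and so does `f`
  · by_cases hgx : g x = 0
    · have hfx : f x = 0 := norm_le_zero_iff.1 (by simpa [hgx] using hfg x)
      simp [hgx, hfx]
    · exact div_mul_cancel₀ (f x) hgx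

open scoped ComplexConjugate InnerProductSpace

namespace MeasFC

variable (Φ : MeasFC X 𝕜 H)

theorem mem_domain_of_bounded {f : X → 𝕜} (hf : Measurable f) (hb : ∃ C, ∀ x, ‖f x‖ ≤ C)
    (y : H) : y ∈ (Φ.ap f).domain :=
  Φ.mfc4_dom f hf hb ▸ Submodule.mem_top

theorem ap_apply_of_eq_one {f : X → 𝕜} (h : f = fun _ => 1) {y : H} (hy : y ∈ (Φ.ap f).domain) :
    Φ.ap f ⟨y, hy⟩ = y := by
  subst h
  exact (le_of_eq Φ.mfc1).2 (y := ⟨y, trivial⟩) rfl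

theorem ap_add_apply {f g k : X → 𝕜} (hf : Measurable f) (hg : Measurable g) (hk : f + g = k)
    {y : H} (hfy : y ∈ (Φ.ap f).domain) (hgy : y ∈ (Φ.ap g).domain)
    (hky : y ∈ (Φ.ap k).domain) :
    Φ.ap f ⟨y, hfy⟩ + Φ.ap g ⟨y, hgy⟩ = Φ.ap k ⟨y, hky⟩ := by
  subst hk
  exact (Φ.mfc2_add f g hf hg).2 (x := ⟨y, hfy, hgy⟩) rfl

theorem ap_apply_ap_apply {f g k : X → 𝕜} (hf : Measurable f) (hg : Measurable g)
    (hk : f * g = k) {y : H} (hy : y ∈ (Φ.ap g).domain) (hgy : Φ.ap g ⟨y, hy⟩ ∈ (Φ.ap f).domain)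
    (hky : y ∈ (Φ.ap k).domain) :
    Φ.ap f ⟨Φ.ap g ⟨y, hy⟩, hgy⟩ = Φ.ap k ⟨y, hky⟩ := by
  subst hk
  exact (Φ.mfc3_le f g hf hg).2 (x := ⟨y, LinearPMap.mem_compP_domain.2 ⟨hy, hgy⟩⟩) rfl

theorem compP_ap_eq {f g k : X → 𝕜} (hf : Measurable f) (hg : Measurable g) (hk : f * g = k)
    (hdom : (Φ.ap k).domain ≤ (Φ.ap g).domain) :
    (Φ.ap f).compP (Φ.ap g) = Φ.ap k := by
  subst hk
  exact LinearPMap.eq_of_le_of_domain_eq (Φ.mfc3_le f g hf hg)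
    ((Φ.mfc3_dom f g hf hg).trans (inf_eq_right.2 hdom))

theorem domain_le_domain_mul {h g : X → 𝕜} (hh : Measurable h) (hg : Measurable g)
    (hb : ∃ C, ∀ x, ‖h x‖ ≤ C) : (Φ.ap g).domain ≤ (Φ.ap (h * g)).domain := by
  have hdom := Φ.mfc3_dom h g hh hg
  rw [LinearPMap.compP_domain_of_domain_eq_top (Φ.mfc4_dom h hh hb)] at hdom
  exact inf_eq_left.1 hdom.symm

theorem inner_ap_conj_apply {g : X → 𝕜} (hg : Measurable g) (hb : ∃ C, ∀ x, ‖g x‖ ≤ C)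
    {u v : H} (hu : u ∈ (Φ.ap fun x => conj (g x)).domain) (hv : v ∈ (Φ.ap g).domain) :
    ⟪Φ.ap (fun x => conj (g x)) ⟨u, hu⟩, v⟫_𝕜 = ⟪u, Φ.ap g ⟨v, hv⟩⟫_𝕜 := by
  have hdense : Dense ((Φ.ap g).domain : Set H) := by
    simp [Φ.mfc4_dom g hg hb]
  have hadj := LinearPMap.adjoint_isFormalAdjoint hdense
  rw [Φ.mfc4_star g hg hb] at hadj
  exact hadj ⟨u, hu⟩ ⟨v, hv⟩

theorem norm_ap_apply_sq {g : X → 𝕜} (hg : Measurable g) (hb : ∃ C, ∀ x, ‖g x‖ ≤ C)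
    {y : H} (hy : y ∈ (Φ.ap g).domain) (hy' : y ∈ (Φ.ap fun x => (‖g x‖ : 𝕜) ^ 2).domain) :
    ‖Φ.ap g ⟨y, hy⟩‖ ^ 2 = RCLike.re ⟪Φ.ap (fun x => (‖g x‖ : 𝕜) ^ 2) ⟨y, hy'⟩, y⟫_𝕜 := by
  have hgc : Measurable fun x => conj (g x) := RCLike.continuous_conj.measurable.comp hg
  have hbc : ∃ C, ∀ x, ‖conj (g x)‖ ≤ C := by simpa only [RCLike.norm_conj] using hb
  rw [← Φ.ap_apply_ap_apply hgc hg (funext fun x => RCLike.conj_mul (g x)) hy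
      (Φ.mem_domain_of_bounded hgc hbc _), Φ.inner_ap_conj_apply hg hb]
  exact (inner_self_eq_norm_sq _).symm

theorem norm_ap_apply_le {h : X → 𝕜} (hh : Measurable h) (h1 : ∀ x, ‖h x‖ ≤ 1) {y : H}
    (hy : y ∈ (Φ.ap h).domain) : ‖Φ.ap h ⟨y, hy⟩‖ ≤ ‖y‖ := by
  have mem : ∀ {u : X → 𝕜}, Measurable u → (∀ x, ‖u x‖ ≤ 1) → y ∈ (Φ.ap u).domain :=
    fun hu hu1 => Φ.mem_domain_of_bounded hu ⟨1, hu1⟩ y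
  set s : X → 𝕜 := fun x => ((√(1 - ‖h x‖ ^ 2) : ℝ) : 𝕜)
  have hs : Measurable s :=
    RCLike.measurable_ofReal.comp (measurable_const.sub (hh.norm.pow_const 2)).sqrt
  have hns : ∀ x, ‖s x‖ ^ 2 = 1 - ‖h x‖ ^ 2 := fun x => by
    rw [RCLike.norm_ofReal, sq_abs, Real.sq_sqrt (by nlinarith [h1 x, norm_nonneg (h x)])]
  have hs1 : ∀ x, ‖s x‖ ≤ 1 := fun x => by nlinarith [hns x, norm_nonneg (s x), norm_nonneg (h x)]
  have hsq1 : ∀ {u : X → 𝕜}, (∀ x, ‖u x‖ ≤ 1) → ∀ x, ‖(‖u x‖ : 𝕜) ^ 2‖ ≤ 1 := fun hu1 x => by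
    rw [norm_pow, RCLike.norm_ofReal, abs_norm]
    exact pow_le_one₀ (norm_nonneg _) (hu1 x)
  have hmsq : ∀ {u : X → 𝕜}, Measurable u → Measurable fun x => (‖u x‖ : 𝕜) ^ 2 :=
    fun hu => (RCLike.measurable_ofReal.comp hu.norm).pow_const 2
  have hsum : (fun x => (‖h x‖ : 𝕜) ^ 2) + (fun x => (‖s x‖ : 𝕜) ^ 2) = fun _ => 1 :=
    funext fun x => by
      simp only [Pi.add_apply]
      exact_mod_cast (by linarith [hns x] : ‖h x‖ ^ 2 + ‖s x‖ ^ 2 = (1 : ℝ))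
  have pythagoras : ‖Φ.ap h ⟨y, hy⟩‖ ^ 2 + ‖Φ.ap s ⟨y, mem hs hs1⟩‖ ^ 2 = ‖y‖ ^ 2 := by
    rw [Φ.norm_ap_apply_sq hh ⟨1, h1⟩ hy (mem (hmsq hh) (hsq1 h1)),
      Φ.norm_ap_apply_sq hs ⟨1, hs1⟩ _ (mem (hmsq hs) (hsq1 hs1)), ← map_add, ← inner_add_left,
      Φ.ap_add_apply (hmsq hh) (hmsq hs) hsum _ _ (mem measurable_const fun _ => norm_one.le),
      Φ.ap_apply_of_eq_one rfl, inner_self_eq_norm_sq]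
  nlinarith [norm_nonneg (Φ.ap h ⟨y, hy⟩), norm_nonneg y]

theorem domain_le_of_norm_le {f g : X → 𝕜} (hf : Measurable f) (hg : Measurable g)
    (hfg : ∀ x, ‖f x‖ ≤ ‖g x‖) : (Φ.ap g).domain ≤ (Φ.ap f).domain := by
  obtain ⟨h, hh, h1, rfl⟩ := exists_measurable_mul_eq_of_norm_le hf hg hfg
  exact Φ.domain_le_domain_mul hh hg ⟨1, h1⟩

theorem norm_ap_apply_le_of_norm_le {f g : X → 𝕜} (hf : Measurable f) (hg : Measurable g)
    (hfg : ∀ x, ‖f x‖ ≤ ‖g x‖) {y : H} (hyg : y ∈ (Φ.ap g).domain)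
    (hyf : y ∈ (Φ.ap f).domain) : ‖Φ.ap f ⟨y, hyf⟩‖ ≤ ‖Φ.ap g ⟨y, hyg⟩‖ := by
  obtain ⟨h, hh, h1, rfl⟩ := exists_measurable_mul_eq_of_norm_le hf hg hfg
  rw [← Φ.ap_apply_ap_apply hh hg rfl hyg (Φ.mem_domain_of_bounded hh ⟨1, h1⟩ _) hyf]
  exact Φ.norm_ap_apply_le hh h1 _

theorem domain_le_of_norm_le_mul_one_add {u w : X → 𝕜} (hu : Measurable u) (hw : Measurable w)
    {C : ℝ} (hC : 0 ≤ C) (h : ∀ x, ‖u x‖ ≤ C * (1 + ‖w x‖)) :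
    (Φ.ap w).domain ≤ (Φ.ap u).domain := by
  set v : X → 𝕜 := fun x => ((‖(C : 𝕜) * w x‖ : ℝ) : 𝕜)
  have hCw : Measurable fun x => (C : 𝕜) * w x := measurable_const.mul hw
  have hv : Measurable v := RCLike.measurable_ofReal.comp hCw.norm
  calc (Φ.ap w).domain ≤ (Φ.ap fun x => (C : 𝕜) * w x).domain := (Φ.mfc2_smul _ w hw).1
    _ ≤ (Φ.ap v).domain := Φ.domain_le_of_norm_le hv hCw fun x => by simp [v]
    _ ≤ (Φ.ap ((fun _ => (C : 𝕜)) + v)).domain := fun y hy =>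
        (Φ.mfc2_add _ v measurable_const hv).1
          ⟨Φ.mem_domain_of_bounded measurable_const ⟨‖(C : 𝕜)‖, fun _ => le_rfl⟩ y, hy⟩
    _ ≤ (Φ.ap u).domain := Φ.domain_le_of_norm_le hu (measurable_const.add hv) fun x => by
        rw [Pi.add_apply, ← RCLike.ofReal_add, RCLike.norm_ofReal, abs_of_nonneg (by positivity),
          norm_mul, RCLike.norm_ofReal, abs_of_nonneg hC]
        linarith [h x]

theorem domain_le_of_degree_le {f : X → 𝕜} (hf : Measurable f) {P Q : Polynomial 𝕜}
    (hPQ : P.degree ≤ Q.degree) :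
    (Φ.ap fun x => Q.eval (f x)).domain ≤ (Φ.ap fun x => P.eval (f x)).domain := by
  obtain ⟨C, hC, hbound⟩ := exists_norm_le_mul_one_add_of_isBigO P.continuous
    (Polynomial.isBigO_cobounded_of_degree_le hPQ)
  exact Φ.domain_le_of_norm_le_mul_one_add (P.continuous.measurable.comp hf)
    (Q.continuous.measurable.comp hf) hC fun x => hbound (f x)

theorem pmPow_ap {f : X → 𝕜} (hf : Measurable f) (n : ℕ) :
    pmPow (Φ.ap f) n = Φ.ap fun x => f x ^ n := by
  induction n with
  | zero =>
    simp only [pow_zero]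
    exact Φ.mfc1.symm
  | succ n ih =>
    have hdom : (Φ.ap fun x => f x ^ (n + 1)).domain ≤ (Φ.ap fun x => f x ^ n).domain := by
      simpa using Φ.domain_le_of_degree_le hf (P := Polynomial.X ^ n)
        (Q := Polynomial.X ^ (n + 1))
        (by rw [Polynomial.degree_X_pow, Polynomial.degree_X_pow]; exact_mod_cast n.le_succ)
    rw [pmPow, ih]
    exact Φ.compP_ap_eq hf (hf.pow_const n) (funext fun x => (pow_succ' (f x) n).symm) hdom

theorem sum_smul_ap_le {g : ℕ → X → 𝕜} (hg : ∀ j, Measurable (g j)) (a : ℕ → 𝕜) (n : ℕ) :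
    ∑ j ∈ Finset.range (n + 1), a j • Φ.ap (g j) ≤
      Φ.ap fun x => ∑ j ∈ Finset.range (n + 1), a j * g j x := by
  induction n with
  | zero =>
    simp only [zero_add, Finset.sum_range_one]
    exact Φ.mfc2_smul (a 0) (g 0) (hg 0)
  | succ n ih =>
    have hsum : Measurable fun x => ∑ j ∈ Finset.range (n + 1), a j * g j x :=
      Finset.measurable_sum _ fun j _ => measurable_const.mul (hg j)
    have hadd := Φ.mfc2_add _ (fun x => a (n + 1) * g (n + 1) x) hsum
      (measurable_const.mul (hg (n + 1)))
    have hsplit : (fun x => ∑ j ∈ Finset.range (n + 1), a j * g j x) +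
        (fun x => a (n + 1) * g (n + 1) x) = fun x => ∑ j ∈ Finset.range (n + 2), a j * g j x :=
      funext fun x => (Finset.sum_range_succ (fun j => a j * g j x) (n + 1)).symm
    rw [hsplit] at hadd
    rw [Finset.sum_range_succ]
    exact (LinearPMap.add_le_add ih (Φ.mfc2_smul _ _ (hg _))).trans hadd

theorem domain_ap_sum_range_mul_pow {f : X → 𝕜} (hf : Measurable f) {n : ℕ} {a : ℕ → 𝕜}
    (ha : a n ≠ 0) :
    (Φ.ap fun x => ∑ j ∈ Finset.range (n + 1), a j * f x ^ j).domain =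
      (Φ.ap fun x => f x ^ n).domain := by
  set P := ∑ j ∈ Finset.range (n + 1), Polynomial.C (a j) * Polynomial.X ^ j
  have hP : P.degree = (Polynomial.X ^ n : Polynomial 𝕜).degree := by
    rw [Polynomial.degree_sum_range_C_mul_X_pow ha, Polynomial.degree_X_pow]
  have hP₁ := Φ.domain_le_of_degree_le hf hP.le
  have hP₂ := Φ.domain_le_of_degree_le hf hP.ge
  simp only [P, Polynomial.eval_finsetSum, Polynomial.eval_mul, Polynomial.eval_C,
    Polynomial.eval_pow, Polynomial.eval_X] at hP₁ hP₂
  exact le_antisymm hP₂ hP₁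

end MeasFC

/-- Corollary 2.3 (a), (c): domination and polynomials. -/
theorem mfc_domination_and_polynomials (Φ : MeasFC X 𝕜 H) (f : X → 𝕜) (hf : Measurable f) :
    -- (a) if |f| ≤ |g| pointwise then dom Φ(g) ⊆ dom Φ(f) and ‖Φ(f)x‖ ≤ ‖Φ(g)x‖
    (∀ g : X → 𝕜, Measurable g → (∀ x, ‖f x‖ ≤ ‖g x‖) →
      (Φ.ap g).domain ≤ (Φ.ap f).domain ∧
      ∀ (x : H) (hxg : x ∈ (Φ.ap g).domain) (hxf : x ∈ (Φ.ap f).domain),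
        ‖Φ.ap f ⟨x, hxf⟩‖ ≤ ‖Φ.ap g ⟨x, hxg⟩‖) ∧
    -- (c) for a polynomial p(z) = ∑_{j=0}^n a_j z^j of degree n ≥ 1,
    --     Φ(p ∘ f) = ∑_{j=0}^n a_j Φ(f)^j and dom Φ(p ∘ f) = dom (Φ(f)^n)
    (∀ (n : ℕ) (a : ℕ → 𝕜), 1 ≤ n → a n ≠ 0 →
      Φ.ap (fun x => ∑ j ∈ Finset.range (n + 1), a j * f x ^ j) =
        ∑ j ∈ Finset.range (n + 1), a j • pmPow (Φ.ap f) j ∧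
      (Φ.ap (fun x => ∑ j ∈ Finset.range (n + 1), a j * f x ^ j)).domain =
        (pmPow (Φ.ap f) n).domain) := by
  refine ⟨fun g hg hfg => ⟨Φ.domain_le_of_norm_le hf hg hfg,
    fun x hxg hxf => Φ.norm_ap_apply_le_of_norm_le hf hg hfg hxg hxf⟩, fun n a _ ha => ?_⟩
  have hdom : (Φ.ap fun x => ∑ j ∈ Finset.range (n + 1), a j * f x ^ j).domain =
      (pmPow (Φ.ap f) n).domain := by
    rw [Φ.pmPow_ap hf, Φ.domain_ap_sum_range_mul_pow hf ha]
  refine ⟨(LinearPMap.eq_of_le_of_domain_eq ?_ ?_).symm, hdom⟩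
  · simp_rw [Φ.pmPow_ap hf]
    exact Φ.sum_smul_ap_le (fun j => hf.pow_const j) a n
  · rw [domain_sum_range_smul_pmPow, hdom]

end
end

section
/- Let Φ be a measurable functional calculus on (X, Σ) and let f : X → 𝕜 be measurable. Then the spectrum of Φ(f) equals its approximate point spectrum, and both equal the Φ-essential range of f: σ(Φ(f)) = σ_ap(Φ(f)) = essran_Φ(f). -/
/-!
For bounded measurable `g` the operator `Φ(g)` is everywhere defined with `‖Φ(g)‖ ≤ sup |g|`,
because `Φ(|g|²) + Φ(C² - |g|²) = C²` and `⟪Φ(|k|²) x, x⟫ = ‖Φ(k) x‖²` by (MFC3, MFC4).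
If `μ` lies in the essential range, every `B = {|f - μ| ≤ ε}` is non-null, and a nonzero vector in
the range of the projection `Φ(𝟏_B)` is an `ε`-approximate eigenvector of `Φ(f)` for `μ`.
If not, some such `B` is null and `Φ(𝟏_Bᶜ / (μ - f))` is a bounded inverse of `μ - Φ(f)`.
Approximate eigenvalues always lie in the spectrum, which closes the cycle of inclusions.

Partially defined operators are handled through their graphs: `(x, y) ∈ (Φ.ap f).graph` reads
`x ∈ dom Φ(f)` and `Φ(f) x = y`, which avoids proofs of domain membership inside terms.
-/

open scoped Topology

noncomputable section

variable {𝕜 : Type*} [RCLike 𝕜]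
variable {H : Type*} [NormedAddCommGroup H] [InnerProductSpace 𝕜 H] [CompleteSpace H]

/-- The spectrum of a partially defined operator `A`: `μ ∉ σ(A)` iff `μ - A` is a bijection
from `dom A` onto `H` with bounded (everywhere-defined continuous) inverse. -/
def pmSpectrum (A : H →ₗ.[𝕜] H) : Set 𝕜 :=
  {μ | ¬ ∃ R : H →L[𝕜] H,
      (∀ x : A.domain, R (μ • (x : H) - A x) = x) ∧
      (∀ y : H, ∃ h : R y ∈ A.domain, μ • R y - A ⟨R y, h⟩ = y)}

/-- The approximate point spectrum: there is a sequence of unit vectors `x n ∈ dom A` with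
`‖(μ - A) x n‖ → 0`. -/
def pmApSpectrum (A : H →ₗ.[𝕜] H) : Set 𝕜 :=
  {μ | ∃ x : ℕ → A.domain, (∀ n, ‖(x n : H)‖ = 1) ∧
      Filter.Tendsto (fun n => ‖μ • (x n : H) - A (x n)‖) Filter.atTop (𝓝 0)}

/-- The `Φ`-essential range of `f`. -/
def MeasFC.essRan {X : Type*} [MeasurableSpace X] (Φ : MeasFC X 𝕜 H) (f : X → 𝕜) : Set 𝕜 :=
  {μ | ∀ ε : ℝ, 0 < ε → ¬ Φ.IsNull {x | ‖f x - μ‖ ≤ ε}}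

namespace LinearPMap

section Module

variable {R E F : Type*} [Ring R] [AddCommGroup E] [Module R E] [AddCommGroup F] [Module R F]

theorem compP_apply {S T : E →ₗ.[R] E} (x : (S.compP T).domain) (hx : (x : E) ∈ T.domain)
    (hTx : T ⟨x, hx⟩ ∈ S.domain) : S.compP T x = S ⟨T ⟨x, hx⟩, hTx⟩ := by
  show S.toFun _ = S.toFun _
  congr 1

theorem mem_compP_graph_iff {S T : E →ₗ.[R] E} {x z : E} :
    (x, z) ∈ (S.compP T).graph ↔ ∃ y, (x, y) ∈ T.graph ∧ (y, z) ∈ S.graph := by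
  constructor
  · intro h
    obtain ⟨w, rfl, rfl⟩ := (S.compP T).mem_graph_iff.mp h
    obtain ⟨u, hu, hux⟩ := Submodule.mem_map.mp w.2
    have hx : (w : E) ∈ T.domain := hux ▸ u.2
    have hTx : T ⟨w, hx⟩ ∈ S.domain := by
      obtain rfl : u = ⟨w, hx⟩ := Subtype.ext hux
      exact hu
    rw [compP_apply w hx hTx]
    exact ⟨T ⟨w, hx⟩, T.mem_graph ⟨w, hx⟩, S.mem_graph ⟨_, hTx⟩⟩
  · rintro ⟨y, hxy, hyz⟩
    obtain ⟨u, rfl, rfl⟩ := T.mem_graph_iff.mp hxy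
    obtain ⟨v, hv, rfl⟩ := S.mem_graph_iff.mp hyz
    replace hv : (v : E) = T u := hv
    have hTu : T u ∈ S.domain := hv ▸ v.2
    obtain rfl : v = ⟨T u, hTu⟩ := Subtype.ext hv
    exact (S.compP T).mem_graph_iff.mpr
      ⟨⟨u, Submodule.mem_map.mpr ⟨u, hTu, rfl⟩⟩, rfl, compP_apply _ u.2 hTu⟩

theorem mem_graph_add {f g : E →ₗ.[R] F} {x : E} {y z : F} (hf : (x, y) ∈ f.graph)
    (hg : (x, z) ∈ g.graph) : (x, y + z) ∈ (f + g).graph := by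
  obtain ⟨u, rfl, rfl⟩ := f.mem_graph_iff.mp hf
  have hu : (u : E) ∈ g.domain := mem_domain_of_mem_graph hg
  refine (f + g).mem_graph_iff.mpr ⟨⟨u, u.2, hu⟩, rfl, ?_⟩
  rw [add_apply]
  exact congrArg _ (g.mem_graph_snd_inj (g.mem_graph ⟨u, hu⟩) hg rfl)

theorem mem_graph_smul {f : E →ₗ.[R] F} {x : E} {y : F} (c : R) [SMulCommClass R R F]
    (hf : (x, y) ∈ f.graph) : (x, c • y) ∈ (c • f).graph := by
  rw [smul_graph]
  exact Submodule.mem_map_of_mem (p := f.graph) hf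

theorem mem_toPMap_graph (L : E →ₗ[R] F) (x : E) : (x, L x) ∈ (L.toPMap ⊤).graph :=
  (L.toPMap ⊤).mem_graph ⟨x, trivial⟩

end Module

section InnerProduct

variable {E F : Type*} [NormedAddCommGroup E] [InnerProductSpace 𝕜 E] [NormedAddCommGroup F]
  [InnerProductSpace 𝕜 F] [CompleteSpace E] {T : E →ₗ.[𝕜] F}

theorem inner_eq_of_mem_graph_adjoint (hT : Dense (T.domain : Set E)) {x z : E} {y w : F}
    (hxy : (x, y) ∈ T.graph) (hwz : (w, z) ∈ T†.graph) : inner 𝕜 z x = inner 𝕜 w y := by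
  obtain ⟨u, rfl, rfl⟩ := T.mem_graph_iff.mp hxy
  obtain ⟨v, rfl, rfl⟩ := T†.mem_graph_iff.mp hwz
  exact adjoint_isFormalAdjoint hT v u

end InnerProduct

end LinearPMap

theorem Set.norm_indicator_one_le {α R : Type*} [NormedRing R] [NormOneClass R] (s : Set α)
    (t : α) : ‖s.indicator (fun _ => (1 : R)) t‖ ≤ 1 :=
  norm_indicator_le_norm_self _ t |>.trans norm_one.le

section Spectrum

variable {E : Type*} [NormedAddCommGroup E] [InnerProductSpace 𝕜 E] {A : E →ₗ.[𝕜] E} {μ : 𝕜}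

theorem pmApSpectrum_subset_pmSpectrum : pmApSpectrum A ⊆ pmSpectrum A := by
  rintro μ ⟨x, hx1, hx⟩ ⟨R, hR, -⟩
  have hlb : ∀ n, 1 ≤ ‖R‖ * ‖μ • (x n : E) - A (x n)‖ := fun n =>
    calc (1 : ℝ) = ‖R (μ • (x n : E) - A (x n))‖ := by rw [hR, hx1]
      _ ≤ ‖R‖ * ‖μ • (x n : E) - A (x n)‖ := R.le_opNorm _
  have h0 := hx.const_mul ‖R‖
  rw [mul_zero] at h0
  obtain ⟨n, hn⟩ := (h0.eventually_lt_const zero_lt_one).exists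
  linarith [hlb n]

theorem mem_pmApSpectrum_of_forall
    (h : ∀ ε > 0, ∃ x y, (x, y) ∈ A.graph ∧ x ≠ 0 ∧ ‖μ • x - y‖ ≤ ε * ‖x‖) :
    μ ∈ pmApSpectrum A := by
  have hunit : ∀ n : ℕ, ∃ u : A.domain, ‖(u : E)‖ = 1 ∧
      ‖μ • (u : E) - A u‖ ≤ 1 / (n + 1) := by
    intro n
    obtain ⟨x, y, hxy, hx, hle⟩ := h (1 / (n + 1)) (by positivity)
    obtain ⟨u, rfl, rfl⟩ := A.mem_graph_iff.mp hxy
    refine ⟨(‖(u : E)‖⁻¹ : 𝕜) • u, norm_smul_inv_norm hx, ?_⟩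
    rw [LinearPMap.map_smul, Submodule.coe_smul, smul_comm μ, ← smul_sub,
      norm_smul, norm_inv, RCLike.norm_ofReal, abs_norm, inv_mul_le_iff₀ (norm_pos_iff.mpr hx),
      mul_comm]
    exact hle
  choose u hu1 hu2 using hunit
  exact ⟨u, hu1, squeeze_zero (fun n => norm_nonneg _) hu2 tendsto_one_div_add_atTop_nhds_zero_nat⟩

theorem notMem_pmSpectrum_of_inverse (R : E →L[𝕜] E)
    (hleft : ∀ x y, (x, y) ∈ A.graph → R (μ • x - y) = x)
    (hright : ∀ y, (R y, μ • R y - y) ∈ A.graph) : μ ∉ pmSpectrum A := by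
  refine not_not.mpr ⟨R, fun x => hleft _ _ (A.mem_graph x), fun y => ?_⟩
  have hy := LinearPMap.mem_domain_of_mem_graph (hright y)
  refine ⟨hy, ?_⟩
  rw [A.mem_graph_snd_inj (A.mem_graph ⟨R y, hy⟩) (hright y) rfl, sub_sub_cancel]

end Spectrum

namespace MeasFC

open LinearPMap Set

variable {X : Type*} [MeasurableSpace X] (Φ : MeasFC X 𝕜 H) {f g : X → 𝕜} {B : Set X} {x y z : H}

theorem mem_graph_add (hf : Measurable f) (hg : Measurable g) (hy : (x, y) ∈ (Φ.ap f).graph)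
    (hz : (x, z) ∈ (Φ.ap g).graph) : (x, y + z) ∈ (Φ.ap (f + g)).graph :=
  le_graph_of_le (Φ.mfc2_add f g hf hg) (LinearPMap.mem_graph_add hy hz)

theorem mem_graph_const_mul (c : 𝕜) (hf : Measurable f) (hy : (x, y) ∈ (Φ.ap f).graph) :
    (x, c • y) ∈ (Φ.ap fun t => c * f t).graph :=
  le_graph_of_le (Φ.mfc2_smul c f hf) (mem_graph_smul c hy)

theorem mem_graph_one (x : H) : (x, x) ∈ (Φ.ap fun _ => 1).graph := by
  rw [Φ.mfc1]
  exact mem_toPMap_graph _ x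

theorem mem_graph_const (c : 𝕜) (x : H) : (x, c • x) ∈ (Φ.ap fun _ => c).graph := by
  simpa using Φ.mem_graph_const_mul c measurable_const (Φ.mem_graph_one x)

theorem mem_graph_mul (hf : Measurable f) (hg : Measurable g) (hy : (x, y) ∈ (Φ.ap g).graph)
    (hz : (y, z) ∈ (Φ.ap f).graph) : (x, z) ∈ (Φ.ap (f * g)).graph :=
  le_graph_of_le (Φ.mfc3_le f g hf hg) (mem_compP_graph_iff.mpr ⟨y, hy, hz⟩)

theorem mem_graph_of_mem_graph_mul (hf : Measurable f) (hg : Measurable g)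
    (hy : (x, y) ∈ (Φ.ap g).graph) (hz : (x, z) ∈ (Φ.ap (f * g)).graph) :
    (y, z) ∈ (Φ.ap f).graph := by
  have hx : x ∈ ((Φ.ap f).compP (Φ.ap g)).domain := by
    rw [Φ.mfc3_dom f g hf hg]
    exact ⟨mem_domain_of_mem_graph hy, mem_domain_of_mem_graph hz⟩
  obtain ⟨z', hz'⟩ := mem_domain_iff.mp hx
  obtain ⟨y', hy', hyz'⟩ := mem_compP_graph_iff.mp hz'
  obtain rfl := (Φ.ap g).mem_graph_snd_inj hy hy' rfl
  obtain rfl := (Φ.ap (f * g)).mem_graph_snd_inj hz (le_graph_of_le (Φ.mfc3_le f g hf hg) hz') rfl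
  exact hyz'

theorem mem_graph_const_sub_iff (μ : 𝕜) (hf : Measurable f) :
    (x, μ • x - y) ∈ (Φ.ap fun t => μ - f t).graph ↔ (x, y) ∈ (Φ.ap f).graph := by
  have key : ∀ {f : X → 𝕜} {y : H}, Measurable f → (x, y) ∈ (Φ.ap f).graph →
      (x, μ • x - y) ∈ (Φ.ap fun t => μ - f t).graph := fun {f y} hf hy => by
    have hsub : (fun t => μ - f t) = (fun _ => μ) + fun t => -1 * f t := by
      ext t; simp [sub_eq_add_neg]
    rw [hsub, sub_eq_add_neg, ← neg_one_smul 𝕜 y]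
    exact Φ.mem_graph_add measurable_const (hf.const_mul (-1)) (Φ.mem_graph_const μ x)
      (Φ.mem_graph_const_mul (-1) hf hy)
  refine ⟨fun h => ?_, key hf⟩
  simpa using key (hf.const_sub μ) h

theorem exists_mem_graph_of_bounded (hg : Measurable g) {C : ℝ} (hC : ∀ t, ‖g t‖ ≤ C) (x : H) :
    ∃ y, (x, y) ∈ (Φ.ap g).graph :=
  mem_domain_iff.mp ((Φ.mfc4_dom g hg ⟨C, hC⟩).ge trivial)

theorem inner_eq_norm_sq_of_mem_graph (hg : Measurable g) {C : ℝ} (hC : ∀ t, ‖g t‖ ≤ C)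
    (hy : (x, y) ∈ (Φ.ap g).graph) (hz : (x, z) ∈ (Φ.ap fun t => (‖g t‖ ^ 2 : 𝕜)).graph) :
    inner 𝕜 z x = (‖y‖ ^ 2 : 𝕜) := by
  have hconj : Measurable fun t => starRingEnd 𝕜 (g t) := RCLike.continuous_conj.measurable.comp hg
  have hmul : (fun t => (‖g t‖ ^ 2 : 𝕜)) = (fun t => starRingEnd 𝕜 (g t)) * g := by
    ext t; simp [RCLike.conj_mul]
  rw [hmul] at hz
  have hyz := Φ.mem_graph_of_mem_graph_mul hconj hg hy hz
  rw [← Φ.mfc4_star g hg ⟨C, hC⟩] at hyz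
  have hdense : Dense ((Φ.ap g).domain : Set H) := by
    simp [Φ.mfc4_dom g hg ⟨C, hC⟩]
  rw [inner_eq_of_mem_graph_adjoint hdense hy hyz, inner_self_eq_norm_sq_to_K]

theorem norm_le_of_mem_graph (hg : Measurable g) {C : ℝ} (hC0 : 0 ≤ C) (hC : ∀ t, ‖g t‖ ≤ C)
    (hy : (x, y) ∈ (Φ.ap g).graph) : ‖y‖ ≤ C * ‖x‖ := by
  set h : X → 𝕜 := fun t => (√(C ^ 2 - ‖g t‖ ^ 2) : ℝ)
  have hgC2 : ∀ t, ‖g t‖ ^ 2 ≤ C ^ 2 := fun t => pow_le_pow_left₀ (norm_nonneg _) (hC t) 2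
  have hh : Measurable h :=
    RCLike.continuous_ofReal.measurable.comp (measurable_const.sub (hg.norm.pow_const 2)).sqrt
  have hh_sq : ∀ t, ‖h t‖ ^ 2 = C ^ 2 - ‖g t‖ ^ 2 := fun t => by
    simp [h, Real.sq_sqrt (sub_nonneg.mpr (hgC2 t))]
  have hhC : ∀ t, ‖h t‖ ≤ C := fun t => (pow_le_pow_iff_left₀ (norm_nonneg _) hC0 two_ne_zero).mp
    (by linarith [hh_sq t, sq_nonneg ‖g t‖])
  have hsq_meas : ∀ {k : X → 𝕜}, Measurable k → Measurable fun t => (‖k t‖ ^ 2 : 𝕜) :=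
    fun hk => (RCLike.continuous_ofReal.measurable.comp hk.norm).pow_const 2
  have hsq_bdd : ∀ {k : X → 𝕜}, (∀ t, ‖k t‖ ≤ C) → ∀ t, ‖(‖k t‖ ^ 2 : 𝕜)‖ ≤ C ^ 2 :=
    fun hk t => by simpa using pow_le_pow_left₀ (norm_nonneg _) (hk t) 2
  have hsum : (fun t => (‖g t‖ ^ 2 : 𝕜)) + (fun t => (‖h t‖ ^ 2 : 𝕜)) = fun _ => (C : 𝕜) ^ 2 := by
    ext t
    simp only [Pi.add_apply]
    exact_mod_cast (by linarith [hh_sq t] : ‖g t‖ ^ 2 + ‖h t‖ ^ 2 = C ^ 2)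
  obtain ⟨z, hz⟩ := Φ.exists_mem_graph_of_bounded hh hhC x
  obtain ⟨u, hu⟩ := Φ.exists_mem_graph_of_bounded (hsq_meas hg) (hsq_bdd hC) x
  obtain ⟨v, hv⟩ := Φ.exists_mem_graph_of_bounded (hsq_meas hh) (hsq_bdd hhC) x
  have huv : u + v = (C : 𝕜) ^ 2 • x := by
    have huv := Φ.mem_graph_add (hsq_meas hg) (hsq_meas hh) hu hv
    rw [hsum] at huv
    exact mem_graph_snd_inj _ huv (Φ.mem_graph_const _ x) rfl
  have key : ‖y‖ ^ 2 + ‖z‖ ^ 2 = C ^ 2 * ‖x‖ ^ 2 := by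
    have := congrArg (fun w => inner 𝕜 w x) huv
    simp only [inner_add_left, inner_smul_left, Φ.inner_eq_norm_sq_of_mem_graph hg hC hy hu,
      Φ.inner_eq_norm_sq_of_mem_graph hh hhC hz hv, inner_self_eq_norm_sq_to_K, map_pow,
      RCLike.conj_ofReal] at this
    exact_mod_cast this
  refine (pow_le_pow_iff_left₀ (norm_nonneg _) (by positivity) two_ne_zero).mp ?_
  rw [mul_pow]
  linarith [sq_nonneg ‖z‖]

def boundedOp (hg : Measurable g) {C : ℝ} (hC0 : 0 ≤ C) (hC : ∀ t, ‖g t‖ ≤ C) : H →L[𝕜] H :=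
  LinearMap.mkContinuous
    ((Φ.ap g).toFun ∘ₗ (LinearEquiv.ofTop _ (Φ.mfc4_dom g hg ⟨C, hC⟩)).symm.toLinearMap) C
    fun x => Φ.norm_le_of_mem_graph hg hC0 hC
      ((Φ.ap g).mem_graph ⟨x, (Φ.mfc4_dom g hg ⟨C, hC⟩).ge trivial⟩)

theorem mem_graph_boundedOp (hg : Measurable g) {C : ℝ} (hC0 : 0 ≤ C) (hC : ∀ t, ‖g t‖ ≤ C)
    (x : H) : (x, Φ.boundedOp hg hC0 hC x) ∈ (Φ.ap g).graph :=
  (Φ.ap g).mem_graph ⟨x, (Φ.mfc4_dom g hg ⟨C, hC⟩).ge trivial⟩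

theorem mem_graph_indicator_self (hB : MeasurableSet B)
    (hy : (x, y) ∈ (Φ.ap (B.indicator fun _ => 1)).graph) :
    (y, y) ∈ (Φ.ap (B.indicator fun _ => 1)).graph := by
  have hmeas : Measurable (B.indicator fun _ => (1 : 𝕜)) := measurable_const.indicator hB
  have hidem : (B.indicator fun _ => (1 : 𝕜)) * B.indicator (fun _ => 1) =
      B.indicator fun _ => 1 := by
    ext t; by_cases ht : t ∈ B <;> simp [ht]
  exact Φ.mem_graph_of_mem_graph_mul hmeas hmeas hy (by rwa [hidem])

theorem mem_graph_indicator_compl (hB : MeasurableSet B) (hnull : Φ.IsNull B) (x : H) :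
    (x, x) ∈ (Φ.ap (Bᶜ.indicator fun _ => 1)).graph := by
  obtain ⟨y, hy⟩ := Φ.exists_mem_graph_of_bounded (measurable_const.indicator hB.compl)
    (norm_indicator_one_le Bᶜ) x
  have h0 : (x, 0) ∈ (Φ.ap (B.indicator fun _ => 1)).graph := by
    rw [hnull]
    exact mem_toPMap_graph 0 x
  have hsum := Φ.mem_graph_add (measurable_const.indicator hB)
    (measurable_const.indicator hB.compl) h0 hy
  rw [zero_add, indicator_self_add_compl] at hsum
  rwa [mem_graph_snd_inj _ hsum (Φ.mem_graph_one x) rfl] at hy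

theorem exists_mem_graph_indicator_ne_zero (hB : MeasurableSet B) (hB0 : ¬Φ.IsNull B) :
    ∃ x y, (x, y) ∈ (Φ.ap (B.indicator fun _ => 1)).graph ∧ y ≠ 0 := by
  by_contra! h
  refine hB0 (LinearPMap.ext ?_ fun u hu _ => ?_)
  · rw [Φ.mfc4_dom _ (measurable_const.indicator hB) ⟨1, norm_indicator_one_le B⟩]
    rfl
  · exact h u _ ((Φ.ap _).mem_graph ⟨u, hu⟩)

theorem essRan_subset_pmApSpectrum (hf : Measurable f) : Φ.essRan f ⊆ pmApSpectrum (Φ.ap f) := by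
  intro μ hμ
  refine mem_pmApSpectrum_of_forall fun ε hε => ?_
  set B := {t | ‖f t - μ‖ ≤ ε}
  have hB : MeasurableSet B := measurableSet_le (hf.sub measurable_const).norm measurable_const
  obtain ⟨x, v, hxv, hv⟩ := Φ.exists_mem_graph_indicator_ne_zero hB (hμ ε hε)
  -- `v` is fixed by the projection `Φ(𝟏_B)`, so `(μ - Φ(f)) v = Φ((μ - f) 𝟏_B) v`.
  have hvv := Φ.mem_graph_indicator_self hB hxv
  have hm : Measurable fun t => μ - f t := measurable_const.sub hf
  set k : X → 𝕜 := (fun t => μ - f t) * B.indicator fun _ => 1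
  have hk : Measurable k := hm.mul (measurable_const.indicator hB)
  have hk_le : ∀ t, ‖k t‖ ≤ ε := fun t => by
    by_cases ht : t ∈ B
    · rw [show k t = μ - f t by simp [k, ht], norm_sub_rev]
      exact ht
    · simp [k, ht, hε.le]
  obtain ⟨w, hw⟩ := Φ.exists_mem_graph_of_bounded hk hk_le v
  have hmw := Φ.mem_graph_of_mem_graph_mul hm (measurable_const.indicator hB) hvv hw
  refine ⟨v, μ • v - w, (Φ.mem_graph_const_sub_iff μ hf).mp (by rwa [sub_sub_cancel]), hv, ?_⟩
  rw [sub_sub_cancel]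
  exact Φ.norm_le_of_mem_graph hk hε.le hk_le hw

theorem pmSpectrum_subset_essRan (hf : Measurable f) : pmSpectrum (Φ.ap f) ⊆ Φ.essRan f := by
  refine fun μ hμ => by_contra fun hμ' => ?_
  obtain ⟨ε, hε, hnull⟩ : ∃ ε > 0, Φ.IsNull {t | ‖f t - μ‖ ≤ ε} := by simpa [essRan] using hμ'
  set B := {t | ‖f t - μ‖ ≤ ε}
  have hB : MeasurableSet B := measurableSet_le (hf.sub measurable_const).norm measurable_const
  set m : X → 𝕜 := fun t => μ - f t
  have hm : Measurable m := measurable_const.sub hf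
  set g : X → 𝕜 := Bᶜ.indicator fun t => (μ - f t)⁻¹
  have hg : Measurable g := (measurable_const.sub hf).inv.indicator hB.compl
  have hg_le : ∀ t, ‖g t‖ ≤ ε⁻¹ := fun t => by
    by_cases ht : t ∈ B
    · simp [g, ht, hε.le]
    · simp only [g, indicator_of_mem (mem_compl ht), norm_inv, norm_sub_rev μ]
      exact inv_anti₀ hε (not_le.mp ht).le
  have hgm : g * m = Bᶜ.indicator fun _ => 1 := by
    ext t
    by_cases ht : t ∈ B
    · simp [g, ht]
    · have hne : μ - f t ≠ 0 := fun h0 => ht (by simp [B, sub_eq_zero.mp h0, hε.le])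
      simp [g, m, ht, hne]
  set R := Φ.boundedOp hg (inv_nonneg.mpr hε.le) hg_le
  have hR := Φ.mem_graph_boundedOp hg (inv_nonneg.mpr hε.le) hg_le
  have hcompl := Φ.mem_graph_indicator_compl hB hnull
  refine notMem_pmSpectrum_of_inverse R (fun x y hxy => ?_) (fun y => ?_) hμ
  · have hx := Φ.mem_graph_mul hg hm ((Φ.mem_graph_const_sub_iff μ hf).mpr hxy) (hR _)
    rw [hgm] at hx
    exact mem_graph_snd_inj _ hx (hcompl x) rfl
  · rw [← Φ.mem_graph_const_sub_iff μ hf, sub_sub_cancel]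
    refine Φ.mem_graph_of_mem_graph_mul hm hg (hR y) ?_
    rw [mul_comm, hgm]
    exact hcompl y

end MeasFC

/-- Theorem 4.1 (a): `σ(Φ(f)) = σ_ap(Φ(f)) = essran_Φ(f)`. -/
theorem mfc_spectrum_eq_essential_range {X : Type*} [MeasurableSpace X]
    (Φ : MeasFC X 𝕜 H) (f : X → 𝕜) (hf : Measurable f) :
    pmSpectrum (Φ.ap f) = pmApSpectrum (Φ.ap f) ∧
    pmSpectrum (Φ.ap f) = Φ.essRan f := by
  have hEA := Φ.essRan_subset_pmApSpectrum hf
  have hAS : pmApSpectrum (Φ.ap f) ⊆ _ := pmApSpectrum_subset_pmSpectrum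
  have hSE := Φ.pmSpectrum_subset_essRan hf
  exact ⟨(hSE.trans hEA).antisymm hAS, hSE.antisymm (hEA.trans hAS)⟩
end
end

section
/- Let X be a Borel subset of 𝕜^d, endowed with the trace of the Borel σ-algebra, and let Φ and Ψ be measurable functional calculi on X with the same Hilbert space H. Denote by z_1, …, z_d : X → 𝕜 the coordinate projections and |z|² = |z_1|² + … + |z_d|². Then each of the following conditions implies Φ = Ψ: (1) Φ(z_j) = Ψ(z_j) for j = 1, …, d; (2) Φ and Ψ agree on the functions z_j/(1 + |z|²) for j = 1, …, d and on 1/(1 + |z|²); (3) Φ and Ψ agree on the functions z_j/(1 + |z|²)^{1/2} for j = 1, …, d. -/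
open scoped Topology

noncomputable section

variable {𝕜 : Type*} [RCLike 𝕜] [MeasurableSpace 𝕜] [BorelSpace 𝕜]
  {H : Type*} [NormedAddCommGroup H] [InnerProductSpace 𝕜 H] [CompleteSpace H]

/-!
For two calculi `Φ, Ψ`, the bounded measurable `f` with `Φ(f) = Ψ(f)` form, by (MFC1)–(MFC5), a
conjugation-closed algebra containing the constants and closed under bounded pointwise limits.
If it contains bounded functions `g₁, …, gₘ` generating the σ-algebra, Stone–Weierstrass puts
every continuous function of `g = (g₁, …, gₘ)` into it; pointwise limits then give the
indicators of preimages of closed sets, hence of all measurable sets, and simple functions give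
every bounded measurable function. Agreement extends to unbounded `f` because `Φ(f)` is closed
and `Φ(f · 𝟙_{|f| ≤ n}) = Φ(𝟙_{|f| ≤ n}) Φ(f)`, where the projections `Φ(𝟙_{|f| ≤ n})` tend
strongly to the identity.

In (2) and (3) the coordinates `z` are measurable functions of the given bounded functions, so
these generate the σ-algebra. For (1), put `r = (1 + |z|²)⁻¹`: for both calculi
`x = Φ(r) x + ∑ⱼ Φ(z̄ⱼ) Φ(zⱼ) Φ(r) x`, where `Φ(z̄ⱼ)` is a formal adjoint of `Φ(zⱼ) = Ψ(zⱼ)`, and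
`I + ∑ⱼ Tⱼ* Tⱼ` is injective, so `Φ(r) = Ψ(r)`; then `Φ(zⱼ r) = Φ(zⱼ) Φ(r) = Ψ(zⱼ r)`, which
is (2).
-/

open Filter Set
open scoped InnerProductSpace

theorem LinearPMap.apply_eq_of_eq {R E F : Type*} [Ring R] [AddCommGroup E] [Module R E]
    [AddCommGroup F] [Module R F] {T S : E →ₗ.[R] F} (h : T = S) {x : E} (hT : x ∈ T.domain)
    (hS : x ∈ S.domain) : T ⟨x, hT⟩ = S ⟨x, hS⟩ := by
  subst h; rfl

section InnerProductSpace

variable {𝕂 E F : Type*} [RCLike 𝕂] [NormedAddCommGroup E] [InnerProductSpace 𝕂 E]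
  [NormedAddCommGroup F] [InnerProductSpace 𝕂 F]

theorem LinearPMap.IsFormalAdjoint.inner_eq_of_mem_graph {S : E →ₗ.[𝕂] F} {T : F →ₗ.[𝕂] E}
    (h : S.IsFormalAdjoint T) {a : E} {b : F} {x : F} {y : E} (hab : (a, b) ∈ S.graph)
    (hxy : (x, y) ∈ T.graph) : ⟪b, x⟫_𝕂 = ⟪a, y⟫_𝕂 := by
  obtain ⟨a, rfl, rfl⟩ := (S.mem_graph_iff).1 hab
  obtain ⟨x, rfl, rfl⟩ := (T.mem_graph_iff).1 hxy
  exact h a x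

/-- `I + ∑ⱼ Tⱼ* Tⱼ` is injective, where `Tⱼ*` may be any formal adjoint of `Tⱼ`. -/
theorem eq_of_add_sum_eq_of_isFormalAdjoint {ι : Type*} [Fintype ι] {T : ι → E →ₗ.[𝕂] F}
    {S S' : ι → F →ₗ.[𝕂] E} (hS : ∀ j, (S j).IsFormalAdjoint (T j))
    (hS' : ∀ j, (S' j).IsFormalAdjoint (T j)) {u u' : E} {a a' : ι → F} {b b' : ι → E}
    (ha : ∀ j, (u, a j) ∈ (T j).graph) (ha' : ∀ j, (u', a' j) ∈ (T j).graph)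
    (hb : ∀ j, (a j, b j) ∈ (S j).graph) (hb' : ∀ j, (a' j, b' j) ∈ (S' j).graph)
    (h : u + ∑ j, b j = u' + ∑ j, b' j) : u = u' := by
  have hterm : ∀ j, ⟪b j - b' j, u - u'⟫_𝕂 = ⟪a j - a' j, a j - a' j⟫_𝕂 := fun j => by
    have hw : (u - u', a j - a' j) ∈ (T j).graph := sub_mem (ha j) (ha' j)
    rw [inner_sub_left, (hS j).inner_eq_of_mem_graph (hb j) hw,
      (hS' j).inner_eq_of_mem_graph (hb' j) hw, ← inner_sub_left]
  have hzero : (u - u') + ∑ j, (b j - b' j) = 0 := by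
    rw [Finset.sum_sub_distrib, ← sub_eq_zero.2 h]; abel
  have hsq : ‖u - u'‖ ^ 2 + ∑ j, ‖a j - a' j‖ ^ 2 = 0 := by
    have := congrArg (fun v => RCLike.re ⟪v, u - u'⟫_𝕂) hzero
    simpa only [inner_add_left, sum_inner, hterm, _root_.map_add, map_sum, inner_self_eq_norm_sq,
      inner_zero_left, _root_.map_zero] using this
  have hu := ((add_eq_zero_iff_of_nonneg (sq_nonneg _)
    (Finset.sum_nonneg fun j _ => sq_nonneg _)).1 hsq).1
  rwa [sq_eq_zero_iff, norm_eq_zero, sub_eq_zero] at hu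

theorem tendsto_of_inner_self_eq {y : ℕ → E} {x : E} (hy : ∀ n, ⟪y n, y n⟫_𝕂 = ⟪x, y n⟫_𝕂)
    (hlim : Tendsto (fun n => ⟪y n, x⟫_𝕂) atTop (𝓝 ⟪x, x⟫_𝕂)) : Tendsto y atTop (𝓝 x) := by
  have hnorm : ∀ n, ‖y n - x‖ = √(RCLike.re (⟪x, x⟫_𝕂 - ⟪y n, x⟫_𝕂)) := fun n => by
    rw [← Real.sqrt_sq (norm_nonneg _), ← inner_self_eq_norm_sq (𝕜 := 𝕂), inner_sub_sub_self,
      hy n, sub_sub_cancel_left, neg_add_eq_sub]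
  have hlim' : Tendsto (fun n => ⟪x, x⟫_𝕂 - ⟪y n, x⟫_𝕂) atTop (𝓝 0) := by
    simpa using hlim.const_sub ⟪x, x⟫_𝕂
  have hsqrt := ((Real.continuous_sqrt.comp RCLike.continuous_re).tendsto 0).comp hlim'
  rw [Function.comp_apply, _root_.map_zero, Real.sqrt_zero] at hsqrt
  exact tendsto_iff_norm_sub_tendsto_zero.2 (hsqrt.congr fun n => (hnorm n).symm)

end InnerProductSpace

theorem Measurable.conj {X 𝕂 : Type*} [MeasurableSpace X] [RCLike 𝕂] {f : X → 𝕂}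
    (hf : Measurable f) : Measurable fun x => starRingEnd 𝕂 (f x) :=
  RCLike.continuous_conj.measurable.comp hf

def NormBounded {X F : Type*} [Norm F] (f : X → F) : Prop := ∃ C, ∀ x, ‖f x‖ ≤ C

namespace NormBounded

variable {X R : Type*}

theorem const [Norm R] (c : R) : NormBounded fun _ : X => c := ⟨‖c‖, fun _ => le_rfl⟩

theorem add [SeminormedAddGroup R] {f g : X → R} (hf : NormBounded f) (hg : NormBounded g) :
    NormBounded (f + g) :=
  let ⟨C, hC⟩ := hf; let ⟨D, hD⟩ := hg
  ⟨C + D, fun x => (norm_add_le _ _).trans (add_le_add (hC x) (hD x))⟩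

theorem mul [SeminormedRing R] {f g : X → R} (hf : NormBounded f) (hg : NormBounded g) :
    NormBounded (f * g) :=
  let ⟨C, hC⟩ := hf; let ⟨D, hD⟩ := hg
  ⟨C * D, fun x => (norm_mul_le _ _).trans
    (mul_le_mul (hC x) (hD x) (norm_nonneg _) ((norm_nonneg _).trans (hC x)))⟩

theorem sum [SeminormedAddCommGroup R] {ι : Type*} (s : Finset ι) {f : ι → X → R}
    (hf : ∀ i, NormBounded (f i)) : NormBounded (∑ i ∈ s, f i) := by
  choose C hC using hf
  exact ⟨∑ i ∈ s, C i, fun x => by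
    simpa only [Finset.sum_apply] using
      (norm_sum_le _ _).trans (Finset.sum_le_sum fun i _ => hC i x)⟩

theorem indicator_one [SeminormedRing R] [NormOneClass R] (A : Set X) :
    NormBounded (A.indicator (1 : X → R)) :=
  ⟨1, fun x => (norm_indicator_le_norm_self _ x).trans_eq norm_one⟩

theorem conj {𝕂 : Type*} [RCLike 𝕂] {f : X → 𝕂} (hf : NormBounded f) :
    NormBounded fun x => starRingEnd 𝕂 (f x) :=
  let ⟨C, hC⟩ := hf
  ⟨C, fun x => (RCLike.norm_conj _).trans_le (hC x)⟩

theorem pi [SeminormedAddGroup R] {ι : Type*} [Fintype ι] {g : X → ι → R}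
    (hg : ∀ i, NormBounded fun x => g x i) : NormBounded g := by
  choose C hC using hg
  refine ⟨∑ i, |C i|, fun x => (pi_norm_le_iff_of_nonneg (by positivity)).2 fun i => ?_⟩
  exact (hC i x).trans ((le_abs_self _).trans
    (Finset.single_le_sum (f := fun i => |C i|) (fun j _ => abs_nonneg _) (Finset.mem_univ i)))

end NormBounded

open ComplexConjugate

section Truncation

variable {X 𝕂 : Type*} [RCLike 𝕂]

def truncSet (f : X → 𝕂) (n : ℕ) : Set X := {x | ‖f x‖ ≤ n}

theorem measurableSet_truncSet [MeasurableSpace X] {f : X → 𝕂} (hf : Measurable f) (n : ℕ) :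
    MeasurableSet (truncSet f n) :=
  measurableSet_le hf.norm measurable_const

theorem eventually_mem_truncSet (f : X → 𝕂) (y : X) : ∀ᶠ n in atTop, y ∈ truncSet f n := by
  obtain ⟨N, hN⟩ := exists_nat_ge ‖f y‖
  filter_upwards [eventually_ge_atTop N] with n hn
  exact hN.trans (Nat.cast_le.2 hn)

theorem normBounded_mul_indicator_truncSet (f : X → 𝕂) (n : ℕ) :
    NormBounded (f * (truncSet f n).indicator 1) :=
  ⟨n, fun y => by by_cases hy : y ∈ truncSet f n <;> simp_all [truncSet]⟩

end Truncation

section Coordinates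

variable {ι 𝕂 : Type*} [Fintype ι] [RCLike 𝕂]

def oneAddSumNormSq (v : ι → 𝕂) : ℝ := 1 + ∑ i, ‖v i‖ ^ 2

theorem one_le_oneAddSumNormSq (v : ι → 𝕂) : 1 ≤ oneAddSumNormSq v :=
  le_add_of_nonneg_right (Finset.sum_nonneg fun _ _ => sq_nonneg _)

theorem oneAddSumNormSq_pos (v : ι → 𝕂) : 0 < oneAddSumNormSq v :=
  one_pos.trans_le (one_le_oneAddSumNormSq v)

theorem ofReal_oneAddSumNormSq_ne_zero (v : ι → 𝕂) : ((oneAddSumNormSq v : ℝ) : 𝕂) ≠ 0 := by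
  exact_mod_cast (oneAddSumNormSq_pos v).ne'

@[fun_prop]
theorem continuous_oneAddSumNormSq : Continuous (oneAddSumNormSq : (ι → 𝕂) → ℝ) := by
  unfold oneAddSumNormSq; fun_prop

theorem sq_norm_apply_add_one_le (v : ι → 𝕂) (j : ι) : ‖v j‖ ^ 2 + 1 ≤ oneAddSumNormSq v := by
  rw [oneAddSumNormSq, add_comm]
  gcongr
  exact Finset.single_le_sum (f := fun i => ‖v i‖ ^ 2) (fun _ _ => sq_nonneg _) (Finset.mem_univ j)

theorem norm_apply_le_oneAddSumNormSq (v : ι → 𝕂) (j : ι) : ‖v j‖ ≤ oneAddSumNormSq v := by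
  nlinarith [sq_norm_apply_add_one_le v j, sq_nonneg (‖v j‖ - 1), norm_nonneg (v j)]

theorem norm_inv_oneAddSumNormSq_le_one (v : ι → 𝕂) : ‖((oneAddSumNormSq v : ℝ) : 𝕂)⁻¹‖ ≤ 1 := by
  rw [norm_inv, RCLike.norm_ofReal, abs_of_pos (oneAddSumNormSq_pos v)]
  exact inv_le_one_of_one_le₀ (one_le_oneAddSumNormSq v)

theorem norm_apply_mul_inv_oneAddSumNormSq_le_one (v : ι → 𝕂) (j : ι) :
    ‖v j * ((oneAddSumNormSq v : ℝ) : 𝕂)⁻¹‖ ≤ 1 := by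
  rw [norm_mul, norm_inv, RCLike.norm_ofReal, abs_of_pos (oneAddSumNormSq_pos v),
    ← div_eq_mul_inv, div_le_one (oneAddSumNormSq_pos v)]
  exact norm_apply_le_oneAddSumNormSq v j

theorem norm_conj_mul_apply_mul_inv_oneAddSumNormSq_le_one (v : ι → 𝕂) (j : ι) :
    ‖conj (v j) * (v j * ((oneAddSumNormSq v : ℝ) : 𝕂)⁻¹)‖ ≤ 1 := by
  rw [norm_mul, norm_mul, RCLike.norm_conj, norm_inv, RCLike.norm_ofReal,
    abs_of_pos (oneAddSumNormSq_pos v), ← mul_assoc, ← sq, ← div_eq_mul_inv,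
    div_le_one (oneAddSumNormSq_pos v)]
  linarith [sq_norm_apply_add_one_le v j]

theorem inv_oneAddSumNormSq_add_sum_conj_mul (v : ι → 𝕂) :
    ((oneAddSumNormSq v : ℝ) : 𝕂)⁻¹ + ∑ j, conj (v j) * (v j * ((oneAddSumNormSq v : ℝ) : 𝕂)⁻¹) =
      1 := by
  have hsum : ((oneAddSumNormSq v : ℝ) : 𝕂) = 1 + ∑ j, ((‖v j‖ : 𝕂)) ^ 2 := by
    simp [oneAddSumNormSq]
  simp_rw [← mul_assoc, RCLike.conj_mul, ← Finset.sum_mul]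
  calc _ = ((oneAddSumNormSq v : ℝ) : 𝕂) * ((oneAddSumNormSq v : ℝ) : 𝕂)⁻¹ := by
        rw [hsum]; ring
    _ = 1 := mul_inv_cancel₀ (ofReal_oneAddSumNormSq_ne_zero v)

def boundedTransform (v : ι → 𝕂) : ι → 𝕂 := fun j => v j / ((√(oneAddSumNormSq v) : ℝ) : 𝕂)

theorem norm_boundedTransform_apply_le_one (v : ι → 𝕂) (j : ι) : ‖boundedTransform v j‖ ≤ 1 := by
  have hs : 0 < √(oneAddSumNormSq v) := Real.sqrt_pos.2 (oneAddSumNormSq_pos v)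
  rw [boundedTransform, norm_div, RCLike.norm_ofReal, abs_of_pos hs, div_le_one hs,
    Real.le_sqrt (norm_nonneg _) (oneAddSumNormSq_pos v).le]
  linarith [sq_norm_apply_add_one_le v j]

theorem one_sub_sum_sq_norm_boundedTransform (v : ι → 𝕂) :
    1 - ∑ i, ‖boundedTransform v i‖ ^ 2 = (oneAddSumNormSq v)⁻¹ := by
  have ha := oneAddSumNormSq_pos v
  simp_rw [boundedTransform, norm_div, RCLike.norm_ofReal, abs_of_nonneg (Real.sqrt_nonneg _),
    div_pow, Real.sq_sqrt ha.le, ← Finset.sum_div]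
  rw [oneAddSumNormSq] at ha ⊢
  field_simp
  ring

theorem leftInverse_boundedTransform :
    Function.LeftInverse (fun u : ι → 𝕂 => fun j => u j / ((√(1 - ∑ i, ‖u i‖ ^ 2) : ℝ) : 𝕂))
      boundedTransform := fun v => by
  have hs : ((√(oneAddSumNormSq v) : ℝ) : 𝕂) ≠ 0 := by
    exact_mod_cast (Real.sqrt_pos.2 (oneAddSumNormSq_pos v)).ne'
  funext j
  dsimp only
  rw [one_sub_sum_sq_norm_boundedTransform, Real.sqrt_inv, RCLike.ofReal_inv, div_inv_eq_mul,
    boundedTransform, div_mul_cancel₀ _ hs]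

def resolventCoords (v : ι → 𝕂) : Option ι → 𝕂 := fun k =>
  k.elim ((oneAddSumNormSq v : 𝕂))⁻¹ fun j => v j / (oneAddSumNormSq v : 𝕂)

theorem norm_resolventCoords_le_one (v : ι → 𝕂) (k : Option ι) : ‖resolventCoords v k‖ ≤ 1 := by
  cases k with
  | none => exact norm_inv_oneAddSumNormSq_le_one v
  | some j =>
    rw [resolventCoords, Option.elim, div_eq_mul_inv]
    exact norm_apply_mul_inv_oneAddSumNormSq_le_one v j

theorem leftInverse_resolventCoords :
    Function.LeftInverse (fun u : Option ι → 𝕂 => fun j => u (some j) / u none)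
      (resolventCoords (𝕂 := 𝕂)) := fun v => by
  funext j
  simp only [resolventCoords, Option.elim, div_inv_eq_mul]
  exact div_mul_cancel₀ _ (ofReal_oneAddSumNormSq_ne_zero v)

end Coordinates

namespace MeasFC

variable {X 𝕂 E : Type*} [MeasurableSpace X] [RCLike 𝕂] [NormedAddCommGroup E]
  [InnerProductSpace 𝕂 E] [CompleteSpace E] {f g : X → 𝕂}

section Calculus

variable (Φ : MeasFC X 𝕂 E)

theorem mem_domain (hf : Measurable f) (hb : NormBounded f) (x : E) : x ∈ (Φ.ap f).domain :=
  Φ.mfc4_dom f hf hb ▸ Submodule.mem_top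

theorem ap_one_apply {x : E} (hx : x ∈ (Φ.ap fun _ => 1).domain) : Φ.ap (fun _ => 1) ⟨x, hx⟩ = x :=
  (LinearPMap.ext_iff.1 Φ.mfc1).2 (hg := Submodule.mem_top)

theorem ap_add (hf : Measurable f) (hbf : NormBounded f) (hg : Measurable g)
    (hbg : NormBounded g) : Φ.ap (f + g) = Φ.ap f + Φ.ap g :=
  (LinearPMap.eq_of_le_of_domain_eq (Φ.mfc2_add f g hf hg) (by
    rw [LinearPMap.add_domain, Φ.mfc4_dom f hf hbf, Φ.mfc4_dom g hg hbg,
      Φ.mfc4_dom _ (hf.add hg) (hbf.add hbg), inf_top_eq])).symm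

theorem ap_const_mul (c : 𝕂) (hf : Measurable f) (hb : NormBounded f) :
    Φ.ap (fun x => c * f x) = c • Φ.ap f :=
  (LinearPMap.eq_of_le_of_domain_eq (Φ.mfc2_smul c f hf) (by
    rw [LinearPMap.smul_domain, Φ.mfc4_dom f hf hb,
      Φ.mfc4_dom _ (hf.const_mul c) ((NormBounded.const c).mul hb)])).symm

theorem ap_mul (hf : Measurable f) (hg : Measurable g) (hbg : NormBounded g)
    (hbfg : NormBounded (f * g)) : Φ.ap (f * g) = (Φ.ap f).compP (Φ.ap g) :=
  (LinearPMap.eq_of_le_of_domain_eq (Φ.mfc3_le f g hf hg) (by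
    rw [Φ.mfc3_dom f g hf hg, Φ.mfc4_dom g hg hbg, Φ.mfc4_dom _ (hf.mul hg) hbfg,
      inf_top_eq])).symm

theorem ap_add_apply_s10 (hf : Measurable f) (hbf : NormBounded f) (hg : Measurable g)
    (hbg : NormBounded g) {x : E} (hx : x ∈ (Φ.ap (f + g)).domain) :
    Φ.ap (f + g) ⟨x, hx⟩ = Φ.ap f ⟨x, Φ.mem_domain hf hbf x⟩ + Φ.ap g ⟨x, Φ.mem_domain hg hbg x⟩ :=
  LinearPMap.apply_eq_of_eq (Φ.ap_add hf hbf hg hbg) hx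
    ⟨Φ.mem_domain hf hbf x, Φ.mem_domain hg hbg x⟩

theorem ap_sum_apply {κ : Type*} (s : Finset κ) {F : κ → X → 𝕂} (hF : ∀ k, Measurable (F k))
    (hb : ∀ k, NormBounded (F k)) {x : E} (hx : x ∈ (Φ.ap (∑ k ∈ s, F k)).domain) :
    Φ.ap (∑ k ∈ s, F k) ⟨x, hx⟩ = ∑ k ∈ s, Φ.ap (F k) ⟨x, Φ.mem_domain (hF k) (hb k) x⟩ := by
  classical
  induction s using Finset.induction_on with
  | empty =>
    have hzero : ∑ k ∈ (∅ : Finset κ), F k = fun _ => 0 * 1 := by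
      rw [Finset.sum_empty]; funext; simp
    rw [LinearPMap.apply_eq_of_eq ((congrArg Φ.ap hzero).trans
      (Φ.ap_const_mul 0 measurable_const (NormBounded.const 1))) hx
      (Φ.mem_domain measurable_const (NormBounded.const 1) x)]
    simp [LinearPMap.smul_apply]
  | insert a s ha ih =>
    have hms : Measurable (∑ k ∈ s, F k) := by fun_prop
    have hbs : NormBounded (∑ k ∈ s, F k) := NormBounded.sum s hb
    rw [LinearPMap.apply_eq_of_eq (congrArg Φ.ap (Finset.sum_insert ha)) hx
      (Φ.mem_domain ((hF a).add hms) ((hb a).add hbs) x), Φ.ap_add_apply_s10 (hF a) (hb a) hms hbs,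
      Finset.sum_insert ha, ih]

theorem ap_add_sum_apply_of_add_sum_eq_one {κ : Type*} [Fintype κ] {F : κ → X → 𝕂}
    (hg : Measurable g) (hbg : NormBounded g) (hF : ∀ k, Measurable (F k))
    (hbF : ∀ k, NormBounded (F k)) (hsum : g + ∑ k, F k = fun _ => 1) (x : E) :
    Φ.ap g ⟨x, Φ.mem_domain hg hbg x⟩ + ∑ k, Φ.ap (F k) ⟨x, Φ.mem_domain (hF k) (hbF k) x⟩ = x := by
  have hms : Measurable (∑ k, F k) := by fun_prop
  have hbs : NormBounded (∑ k, F k) := NormBounded.sum _ hbF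
  calc _ = Φ.ap (g + ∑ k, F k) ⟨x, Φ.mem_domain (hg.add hms) (hbg.add hbs) x⟩ := by
        rw [Φ.ap_add_apply_s10 hg hbg hms hbs, Φ.ap_sum_apply Finset.univ hF hbF]
    _ = Φ.ap (fun _ => 1) ⟨x, Φ.mem_domain measurable_const (NormBounded.const 1) x⟩ :=
        LinearPMap.apply_eq_of_eq (congrArg Φ.ap hsum) _ _
    _ = x := Φ.ap_one_apply _

theorem mem_graph_of_mul {h : X → 𝕂} (hf : Measurable f) (hg : Measurable g) (hfg : f * g = h)
    {x : E} (hx : x ∈ (Φ.ap g).domain) (hhx : x ∈ (Φ.ap h).domain) :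
    (Φ.ap g ⟨x, hx⟩, Φ.ap h ⟨x, hhx⟩) ∈ (Φ.ap f).graph := by
  subst hfg
  have hmem : x ∈ ((Φ.ap f).compP (Φ.ap g)).domain := by
    rw [Φ.mfc3_dom f g hf hg]; exact ⟨hx, hhx⟩
  have hgx : Φ.ap g ⟨x, hx⟩ ∈ (Φ.ap f).domain := by
    obtain ⟨y, hy, rfl⟩ := hmem
    exact hy
  exact (LinearPMap.mem_graph_iff _).2
    ⟨⟨_, hgx⟩, rfl, (Φ.mfc3_le f g hf hg).2 (x := ⟨x, hmem⟩) (y := ⟨x, hhx⟩) rfl⟩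

theorem isFormalAdjoint_of_bounded (hf : Measurable f) (hb : NormBounded f) :
    (Φ.ap fun x => conj (f x)).IsFormalAdjoint (Φ.ap f) :=
  Φ.mfc4_star f hf hb ▸ LinearPMap.adjoint_isFormalAdjoint (by
    rw [Φ.mfc4_dom f hf hb, Submodule.top_coe]; exact dense_univ)

theorem inner_ap_indicator_apply_self {A : Set X} (hA : MeasurableSet A) (x : E)
    (hx : x ∈ (Φ.ap (A.indicator 1)).domain) :
    ⟪Φ.ap (A.indicator 1) ⟨x, hx⟩, Φ.ap (A.indicator 1) ⟨x, hx⟩⟫_𝕂 =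
      ⟪x, Φ.ap (A.indicator 1) ⟨x, hx⟩⟫_𝕂 := by
  set e : X → 𝕂 := A.indicator 1
  have he : Measurable e := measurable_one.indicator hA
  have hbe : NormBounded e := NormBounded.indicator_one A
  have hsymm := Φ.isFormalAdjoint_of_bounded he hbe
  rw [show (fun x => conj (e x)) = e by funext y; by_cases hy : y ∈ A <;> simp [e, hy]] at hsymm
  have hidem : (Φ.ap e ⟨x, hx⟩, Φ.ap e ⟨x, hx⟩) ∈ (Φ.ap e).graph :=
    Φ.mem_graph_of_mul he he (by simp only [e, ← Set.inter_indicator_one, Set.inter_self]) hx hx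
  obtain ⟨y, hy, hPy⟩ := (LinearPMap.mem_graph_iff _).1 hidem
  calc _ = ⟪Φ.ap e ⟨x, hx⟩, (y : E)⟫_𝕂 := by rw [hy]
    _ = ⟪x, Φ.ap e y⟫_𝕂 := hsymm ⟨x, hx⟩ y
    _ = _ := by rw [hPy]

theorem tendsto_ap_indicator {A : ℕ → Set X} (hA : ∀ n, MeasurableSet (A n))
    (hmem : ∀ y, ∀ᶠ n in atTop, y ∈ A n) {x : E}
    (hx : ∀ n, x ∈ (Φ.ap ((A n).indicator 1)).domain) :
    Tendsto (fun n => Φ.ap ((A n).indicator 1) ⟨x, hx n⟩) atTop (𝓝 x) := by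
  refine tendsto_of_inner_self_eq (fun n => Φ.inner_ap_indicator_apply_self (hA n) x _) ?_
  have hlim : ∀ y, Tendsto (fun n => (A n).indicator (1 : X → 𝕂) y) atTop (𝓝 1) := fun y => by
    have := (tendsto_indicator_const_apply_iff_eventually atTop (1 : 𝕂) y (As := A)
      (A := univ)).2 (by simpa only [mem_univ, iff_true] using hmem y)
    rwa [indicator_univ] at this
  have := Φ.mfc5 _ _ (fun n => measurable_one.indicator (hA n)) measurable_const
    ⟨1, fun n y => (norm_indicator_le_norm_self _ y).trans_eq norm_one⟩ hlim x x hx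
    (Φ.mem_domain measurable_const (NormBounded.const 1) x)
  rwa [Φ.ap_one_apply] at this

theorem tendsto_ap_mul_indicator (hf : Measurable f) {A : ℕ → Set X}
    (hA : ∀ n, MeasurableSet (A n)) (hmem : ∀ y, ∀ᶠ n in atTop, y ∈ A n) {x : E}
    (hx : x ∈ (Φ.ap f).domain) (hxn : ∀ n, x ∈ (Φ.ap (f * (A n).indicator 1)).domain) :
    Tendsto (fun n => Φ.ap (f * (A n).indicator 1) ⟨x, hxn n⟩) atTop (𝓝 (Φ.ap f ⟨x, hx⟩)) := by
  have he : ∀ n, Measurable ((A n).indicator (1 : X → 𝕂)) :=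
    fun n => measurable_one.indicator (hA n)
  refine (Φ.tendsto_ap_indicator hA hmem
    (fun n => Φ.mem_domain (he n) (NormBounded.indicator_one _) _)).congr fun n => ?_
  exact ((LinearPMap.image_iff _).2 (Φ.mem_graph_of_mul (he n) hf (mul_comm _ _) hx _)).symm

theorem isFormalAdjoint (hf : Measurable f) :
    (Φ.ap fun x => conj (f x)).IsFormalAdjoint (Φ.ap f) := by
  rintro ⟨v, hv⟩ ⟨w, hw⟩
  set A := truncSet f
  have hA := measurableSet_truncSet hf
  have he : ∀ n, Measurable ((A n).indicator (1 : X → 𝕂)) :=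
    fun n => measurable_one.indicator (hA n)
  have hb := normBounded_mul_indicator_truncSet f
  have hconj : ∀ n, (fun x => conj (f x)) * (A n).indicator 1 =
      fun x => conj ((f * (A n).indicator 1 : X → 𝕂) x) := fun n => by
    funext y; by_cases hy : y ∈ A n <;> simp [hy]
  have hbconj : ∀ n, NormBounded ((fun x => conj (f x)) * (A n).indicator 1) :=
    fun n => hconj n ▸ (hb n).conj
  have hterm : ∀ n, ⟪Φ.ap _ ⟨v, Φ.mem_domain (hf.conj.mul (he n)) (hbconj n) v⟩, w⟫_𝕂 =
      ⟪v, Φ.ap _ ⟨w, Φ.mem_domain (hf.mul (he n)) (hb n) w⟩⟫_𝕂 := fun n => by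
    rw [LinearPMap.apply_eq_of_eq (congrArg Φ.ap (hconj n)) _
      (Φ.mem_domain (hf.mul (he n)).conj (hb n).conj v)]
    exact Φ.isFormalAdjoint_of_bounded (hf.mul (he n)) (hb n) ⟨v, _⟩ ⟨w, _⟩
  have hv' := Φ.tendsto_ap_mul_indicator hf.conj hA (eventually_mem_truncSet f) hv
    fun n => Φ.mem_domain (hf.conj.mul (he n)) (hbconj n) v
  have hw' := Φ.tendsto_ap_mul_indicator hf hA (eventually_mem_truncSet f) hw
    fun n => Φ.mem_domain (hf.mul (he n)) (hb n) w
  exact tendsto_nhds_unique ((hv'.inner tendsto_const_nhds).congr hterm)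
    (tendsto_const_nhds.inner hw')

end Calculus

section Uniqueness

variable {Φ Ψ : MeasFC X 𝕂 E}

theorem ap_le_of_forall_bounded
    (h : ∀ g : X → 𝕂, Measurable g → NormBounded g → Φ.ap g = Ψ.ap g) (hf : Measurable f) :
    Φ.ap f ≤ Ψ.ap f := by
  refine LinearPMap.le_of_le_graph fun p hp => ?_
  obtain ⟨⟨x, hx⟩, rfl⟩ := (LinearPMap.mem_graph_iff' _).1 hp
  have hA := measurableSet_truncSet hf
  have he : ∀ n, Measurable ((truncSet f n).indicator (1 : X → 𝕂)) :=
    fun n => measurable_one.indicator (hA n)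
  have hb := normBounded_mul_indicator_truncSet f
  have hgraph : ∀ n, (Ψ.ap _ ⟨x, Ψ.mem_domain (he n) (NormBounded.indicator_one _) x⟩,
      Ψ.ap _ ⟨x, Ψ.mem_domain (hf.mul (he n)) (hb n) x⟩) ∈ (Ψ.ap f).graph :=
    fun n => Ψ.mem_graph_of_mul hf (he n) rfl _ _
  refine (Ψ.isClosed f hf).mem_of_tendsto
    ((Ψ.tendsto_ap_indicator hA (eventually_mem_truncSet f) _).prodMk_nhds ?_)
    (Eventually.of_forall hgraph)
  refine (Φ.tendsto_ap_mul_indicator hf hA (eventually_mem_truncSet f) hx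
    fun n => Φ.mem_domain (hf.mul (he n)) (hb n) x).congr fun n => ?_
  exact LinearPMap.apply_eq_of_eq (h _ (hf.mul (he n)) (hb n)) _ _

theorem ap_eq_of_forall_bounded
    (h : ∀ g : X → 𝕂, Measurable g → NormBounded g → Φ.ap g = Ψ.ap g) (hf : Measurable f) :
    Φ.ap f = Ψ.ap f :=
  le_antisymm (ap_le_of_forall_bounded h hf)
    (ap_le_of_forall_bounded (fun g hg hb => (h g hg hb).symm) hf)

variable (Φ Ψ) in
def Agree (f : X → 𝕂) : Prop := Measurable f ∧ NormBounded f ∧ Φ.ap f = Ψ.ap f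

theorem Agree.add (hf : Agree Φ Ψ f) (hg : Agree Φ Ψ g) : Agree Φ Ψ (f + g) :=
  ⟨hf.1.add hg.1, hf.2.1.add hg.2.1, by
    rw [Φ.ap_add hf.1 hf.2.1 hg.1 hg.2.1, Ψ.ap_add hf.1 hf.2.1 hg.1 hg.2.1, hf.2.2, hg.2.2]⟩

theorem Agree.const_mul (c : 𝕂) (hf : Agree Φ Ψ f) : Agree Φ Ψ fun x => c * f x :=
  ⟨hf.1.const_mul c, (NormBounded.const c).mul hf.2.1, by
    rw [Φ.ap_const_mul c hf.1 hf.2.1, Ψ.ap_const_mul c hf.1 hf.2.1, hf.2.2]⟩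

theorem Agree.mul_of_eq (hf : Measurable f) (hfΦΨ : Φ.ap f = Ψ.ap f) (hg : Agree Φ Ψ g)
    (hfg : NormBounded (f * g)) : Agree Φ Ψ (f * g) :=
  ⟨hf.mul hg.1, hfg, by rw [Φ.ap_mul hf hg.1 hg.2.1 hfg, Ψ.ap_mul hf hg.1 hg.2.1 hfg, hfΦΨ, hg.2.2]⟩

theorem Agree.mul (hf : Agree Φ Ψ f) (hg : Agree Φ Ψ g) : Agree Φ Ψ (f * g) :=
  mul_of_eq hf.1 hf.2.2 hg (hf.2.1.mul hg.2.1)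

theorem Agree.conj (hf : Agree Φ Ψ f) : Agree Φ Ψ fun x => conj (f x) :=
  ⟨hf.1.conj, hf.2.1.conj, by rw [← Φ.mfc4_star f hf.1 hf.2.1, ← Ψ.mfc4_star f hf.1 hf.2.1, hf.2.2]⟩

theorem Agree.one : Agree Φ Ψ fun _ => (1 : 𝕂) :=
  ⟨measurable_const, NormBounded.const 1, Φ.mfc1.trans Ψ.mfc1.symm⟩

theorem Agree.const (c : 𝕂) : Agree Φ Ψ fun _ => c := by
  simpa using one.const_mul c

theorem Agree.sub (hf : Agree Φ Ψ f) (hg : Agree Φ Ψ g) : Agree Φ Ψ (f - g) := by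
  convert hf.add (hg.const_mul (-1)) using 1
  funext x; simp [sub_eq_add_neg]

theorem Agree.of_tendsto {u : ℕ → X → 𝕂} (hu : ∀ n, Agree Φ Ψ (u n)) {C : ℝ}
    (hC : ∀ n x, ‖u n x‖ ≤ C) (hlim : ∀ x, Tendsto (fun n => u n x) atTop (𝓝 (f x))) :
    Agree Φ Ψ f := by
  have hf : Measurable f :=
    measurable_of_tendsto_metrizable (fun n => (hu n).1) (tendsto_pi_nhds.2 hlim)
  have hb : NormBounded f := ⟨C, fun x => le_of_tendsto' (hlim x).norm fun n => hC n x⟩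
  refine ⟨hf, hb, LinearPMap.ext (by rw [Φ.mfc4_dom f hf hb, Ψ.mfc4_dom f hf hb])
    fun x hx hx' => ext_inner_right 𝕂 fun y => ?_⟩
  refine tendsto_nhds_unique (Φ.mfc5 u f (fun n => (hu n).1) hf ⟨C, hC⟩ hlim x y
    (fun n => Φ.mem_domain (hu n).1 (hu n).2.1 x) hx) ?_
  refine (Ψ.mfc5 u f (fun n => (hu n).1) hf ⟨C, hC⟩ hlim x y
    (fun n => Ψ.mem_domain (hu n).1 (hu n).2.1 x) hx').congr fun n => ?_
  rw [LinearPMap.apply_eq_of_eq (hu n).2.2]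

theorem Agree.indicator_compl {A : Set X} (h : Agree Φ Ψ (A.indicator 1)) :
    Agree Φ Ψ (Aᶜ.indicator 1) := by
  rw [Set.indicator_compl]; exact one.sub h

theorem Agree.indicator_inter {A B : Set X} (hA : Agree Φ Ψ (A.indicator 1))
    (hB : Agree Φ Ψ (B.indicator 1)) : Agree Φ Ψ ((A ∩ B).indicator 1) := by
  rw [Set.inter_indicator_one]; exact hA.mul hB

theorem Agree.indicator_union {A B : Set X} (hA : Agree Φ Ψ (A.indicator 1))
    (hB : Agree Φ Ψ (B.indicator 1)) : Agree Φ Ψ ((A ∪ B).indicator 1) := by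
  rw [← compl_compl (A ∪ B), compl_union]
  exact (hA.indicator_compl.indicator_inter hB.indicator_compl).indicator_compl

theorem Agree.indicator_iUnion {A : ℕ → Set X} (h : ∀ n, Agree Φ Ψ ((A n).indicator 1)) :
    Agree Φ Ψ ((⋃ n, A n).indicator 1) := by
  have hacc : ∀ n, Agree Φ Ψ ((accumulate A n).indicator 1) := by
    intro n
    induction n with
    | zero => rw [accumulate_zero_nat]; exact h 0
    | succ n ih => rw [accumulate_succ]; exact ih.indicator_union (h _)
  refine of_tendsto hacc (C := 1) (fun n y => (norm_indicator_le_norm_self _ y).trans_eq norm_one)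
    fun y => ?_
  rw [← iUnion_accumulate]
  refine (tendsto_indicator_const_apply_iff_eventually atTop (1 : 𝕂) y).2 ?_
  by_cases hy : y ∈ ⋃ n, accumulate A n
  · obtain ⟨i, hi⟩ := mem_iUnion.1 hy
    filter_upwards [eventually_ge_atTop i] with n hn
    exact iff_of_true (monotone_accumulate hn hi) hy
  · exact Eventually.of_forall fun n => iff_of_false (fun h => hy (mem_iUnion_of_mem n h)) hy

open MeasureTheory in
theorem Agree.of_forall_indicator (h : ∀ A, MeasurableSet A → Agree Φ Ψ (A.indicator 1))
    (hf : Measurable f) (hb : NormBounded f) : Agree Φ Ψ f := by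
  have hsimple : ∀ φ : SimpleFunc X 𝕂, Agree Φ Ψ φ := by
    intro φ
    induction φ using SimpleFunc.induction with
    | @const c s hs =>
      convert (h s hs).const_mul c using 1
      funext x; by_cases hx : x ∈ s <;> simp [hx]
    | add _ hφ hψ => simpa only [SimpleFunc.coe_add] using hφ.add hψ
  obtain ⟨C, hC⟩ := hb
  exact of_tendsto (fun n => hsimple (SimpleFunc.approxOn f hf univ 0 (mem_univ 0) n))
    (C := C + C) (fun n x => (SimpleFunc.norm_approxOn_zero_le hf (mem_univ 0) x n).trans
      (add_le_add (hC x) (hC x))) fun x => SimpleFunc.tendsto_approxOn hf (mem_univ 0) (by simp)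

section Generators

variable {ι : Type*} [Fintype ι] {g : X → ι → 𝕂}

theorem Agree.comp_of_mem_closure {K : Type*} [TopologicalSpace K] [CompactSpace K]
    {S : Set C(K, 𝕂)} {γ : X → K} (hS : ∀ q ∈ S, Agree Φ Ψ (q ∘ γ)) {p : C(K, 𝕂)}
    (hp : p ∈ closure S) : Agree Φ Ψ (p ∘ γ) := by
  choose q hqS hq using fun n : ℕ =>
    Metric.mem_closure_iff.1 hp (1 / (n + 1)) Nat.one_div_pos_of_nat
  have hlim : Tendsto q atTop (𝓝 p) :=
    tendsto_iff_dist_tendsto_zero.2 (squeeze_zero (fun _ => dist_nonneg)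
      (fun n => (dist_comm _ _).trans_le (hq n).le) tendsto_one_div_add_atTop_nhds_zero_nat)
  refine of_tendsto (fun n => hS _ (hqS n)) (C := ‖p‖ + 1) (fun n x => ?_)
    fun x => ((continuous_eval_const (γ x)).tendsto p).comp hlim
  have hdist : ‖q n - p‖ ≤ 1 := by
    rw [← dist_eq_norm, dist_comm]
    exact (hq n).le.trans (div_le_one_of_le₀ (by simp) (by positivity))
  calc ‖q n (γ x)‖ ≤ ‖q n‖ := (q n).norm_coe_le_norm _
    _ ≤ ‖p‖ + ‖q n - p‖ := norm_le_norm_add_norm_sub' _ _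
    _ ≤ ‖p‖ + 1 := by gcongr

theorem Agree.comp_of_continuous (hg : ∀ i, Agree Φ Ψ fun x => g x i) {p : (ι → 𝕂) → 𝕂}
    (hp : Continuous p) : Agree Φ Ψ (p ∘ g) := by
  obtain ⟨R, hR⟩ := NormBounded.pi fun i => (hg i).2.1
  let K := Metric.closedBall (0 : ι → 𝕂) R
  have : CompactSpace K := isCompact_iff_compactSpace.1 (isCompact_closedBall 0 R)
  let γ : X → K := fun x => ⟨g x, mem_closedBall_zero_iff.2 (hR x)⟩
  let coord : ι → C(K, 𝕂) :=
    fun i => ⟨fun v => (v : ι → 𝕂) i, (continuous_apply i).comp continuous_subtype_val⟩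
  let A := StarAlgebra.adjoin 𝕂 (range coord)
  have hA : ∀ q ∈ A, Agree Φ Ψ (q ∘ γ) := fun q hq => by
    induction hq using StarAlgebra.adjoin_induction with
    | mem q hq => obtain ⟨i, rfl⟩ := hq; exact hg i
    | algebraMap c => exact const c
    | add q r _ _ hq hr => exact hq.add hr
    | mul q r _ _ hq hr => exact hq.mul hr
    | star q _ hq => exact hq.conj
  have hsep : A.SeparatesPoints := fun v w hvw => by
    obtain ⟨i, hi⟩ := Function.ne_iff.1 (Subtype.coe_injective.ne hvw)
    exact ⟨coord i, ⟨coord i, StarAlgebra.subset_adjoin 𝕂 _ ⟨i, rfl⟩, rfl⟩, hi⟩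
  have hdense := ContinuousMap.starSubalgebra_topologicalClosure_eq_top_of_separatesPoints A hsep
  exact comp_of_mem_closure hA (p := ⟨fun v => p v, by fun_prop⟩)
    (by rw [← StarSubalgebra.topologicalClosure_coe, hdense]; trivial)

theorem Agree.indicator_preimage_of_isClosed (hg : ∀ i, Agree Φ Ψ fun x => g x i)
    {s : Set (ι → 𝕂)} (hs : IsClosed s) : Agree Φ Ψ ((g ⁻¹' s).indicator 1) := by
  refine of_tendsto (u := fun n x => ((hs.apprSeq n (g x) : ℝ) : 𝕂))
    (fun n => comp_of_continuous hg (p := fun v => ((hs.apprSeq n v : ℝ) : 𝕂)) (by fun_prop))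
    (C := 1) (fun n x => ?_) fun x => ?_
  · rw [RCLike.norm_ofReal, abs_of_nonneg (NNReal.coe_nonneg _)]
    exact_mod_cast HasOuterApproxClosed.apprSeq_apply_le_one hs n (g x)
  · have := (((RCLike.continuous_ofReal (K := 𝕂)).comp NNReal.continuous_coe).tendsto _).comp
      (tendsto_pi_nhds.1 (HasOuterApproxClosed.tendsto_apprSeq hs) (g x))
    have hval : (g ⁻¹' s).indicator (1 : X → 𝕂) x =
        (RCLike.ofReal ∘ NNReal.toReal) (s.indicator (fun _ => 1) (g x)) := by
      by_cases hx : g x ∈ s <;> simp [hx]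
    rw [hval]; exact this

theorem Agree.indicator_preimage (hg : ∀ i, Agree Φ Ψ fun x => g x i) {s : Set (ι → 𝕂)}
    (hs : MeasurableSet s) : Agree Φ Ψ ((g ⁻¹' s).indicator 1) := by
  rw [BorelSpace.measurable_eq (α := ι → 𝕂), borel_eq_generateFrom_isClosed] at hs
  induction s, hs using MeasurableSpace.generateFrom_induction with
  | hC t ht _ => exact indicator_preimage_of_isClosed hg ht
  | empty => simpa using const (0 : 𝕂)
  | compl t _ ht => rw [preimage_compl]; exact ht.indicator_compl
  | iUnion s _ hs => rw [preimage_iUnion]; exact indicator_iUnion hs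

theorem ap_eq_of_agree_generators (hg : ∀ i, Agree Φ Ψ fun x => g x i)
    (hX : ‹MeasurableSpace X› ≤ MeasurableSpace.comap g inferInstance) (hf : Measurable f) :
    Φ.ap f = Ψ.ap f := by
  refine ap_eq_of_forall_bounded (fun f hf hb => (Agree.of_forall_indicator ?_ hf hb).2.2) hf
  intro A hA
  obtain ⟨s, hs, rfl⟩ := hX A hA
  exact Agree.indicator_preimage hg hs

theorem ap_eq_of_agree_comp {Y : Type*} [MeasurableSpace Y] {z : X → Y}
    (hX : ‹MeasurableSpace X› = MeasurableSpace.comap z inferInstance)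
    {G : Y → ι → 𝕂} {F : (ι → 𝕂) → Y} (hF : Measurable F) (hFG : Function.LeftInverse F G)
    (hG : ∀ i, Agree Φ Ψ fun x => G (z x) i) (hf : Measurable f) : Φ.ap f = Ψ.ap f := by
  refine ap_eq_of_agree_generators hG (hX.le.trans ?_) hf
  calc MeasurableSpace.comap z inferInstance
      = MeasurableSpace.comap (F ∘ fun x => G (z x)) inferInstance := by
        congr 1; funext x; exact (hFG (z x)).symm
    _ = MeasurableSpace.comap (fun x => G (z x)) (MeasurableSpace.comap F inferInstance) :=
        MeasurableSpace.comap_comp.symm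
    _ ≤ MeasurableSpace.comap (fun x => G (z x)) inferInstance :=
        MeasurableSpace.comap_mono hF.comap_le

end Generators

section CoordinateGenerators

variable {ι : Type*} [Fintype ι] {z : X → ι → 𝕂}

theorem ap_eq_of_agree_boundedTransform
    (hX : ‹MeasurableSpace X› = MeasurableSpace.comap z inferInstance)
    (h : ∀ j, Φ.ap (fun x => boundedTransform (z x) j) = Ψ.ap fun x => boundedTransform (z x) j)
    (hf : Measurable f) : Φ.ap f = Ψ.ap f := by
  have hz : Measurable z := measurable_iff_comap_le.2 hX.ge
  refine ap_eq_of_agree_comp hX (by fun_prop) leftInverse_boundedTransform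
    (fun j => ⟨?_, ⟨1, fun x => norm_boundedTransform_apply_le_one _ j⟩, h j⟩) hf
  unfold boundedTransform; fun_prop

theorem ap_eq_of_agree_resolventCoords
    (hX : ‹MeasurableSpace X› = MeasurableSpace.comap z inferInstance)
    (h : ∀ k, Φ.ap (fun x => resolventCoords (z x) k) = Ψ.ap fun x => resolventCoords (z x) k)
    (hf : Measurable f) : Φ.ap f = Ψ.ap f := by
  have hz : Measurable z := measurable_iff_comap_le.2 hX.ge
  refine ap_eq_of_agree_comp hX (by fun_prop) leftInverse_resolventCoords
    (fun k => ⟨?_, ⟨1, fun x => norm_resolventCoords_le_one _ k⟩, h k⟩) hf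
  cases k <;> · simp only [resolventCoords, Option.elim]; fun_prop

theorem ap_inv_oneAddSumNormSq_eq (hz : Measurable z)
    (h : ∀ j, Φ.ap (fun x => z x j) = Ψ.ap fun x => z x j) :
    Φ.ap (fun x => ((oneAddSumNormSq (z x) : ℝ) : 𝕂)⁻¹) =
      Ψ.ap fun x => ((oneAddSumNormSq (z x) : ℝ) : 𝕂)⁻¹ := by
  set r : X → 𝕂 := fun x => ((oneAddSumNormSq (z x) : ℝ) : 𝕂)⁻¹
  set zr : ι → X → 𝕂 := fun j => (fun x => z x j) * r
  set q : ι → X → 𝕂 := fun j => (fun x => conj (z x j)) * zr j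
  have hzj : ∀ j, Measurable fun x => z x j := fun j => by fun_prop
  have hr : Measurable r := by fun_prop
  have hbr : NormBounded r := ⟨1, fun x => norm_inv_oneAddSumNormSq_le_one _⟩
  have hzr : ∀ j, Measurable (zr j) := fun j => (hzj j).mul hr
  have hbzr : ∀ j, NormBounded (zr j) :=
    fun j => ⟨1, fun x => norm_apply_mul_inv_oneAddSumNormSq_le_one (z x) j⟩
  have hq : ∀ j, Measurable (q j) := fun j => (hzj j).conj.mul (hzr j)
  have hbq : ∀ j, NormBounded (q j) :=
    fun j => ⟨1, fun x => norm_conj_mul_apply_mul_inv_oneAddSumNormSq_le_one (z x) j⟩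
  have hsum : r + ∑ j, q j = fun _ => 1 := by
    funext x
    simpa [q, zr, r] using inv_oneAddSumNormSq_add_sum_conj_mul (z x)
  refine LinearPMap.ext (by rw [Φ.mfc4_dom r hr hbr, Ψ.mfc4_dom r hr hbr]) fun x _ _ => ?_
  refine eq_of_add_sum_eq_of_isFormalAdjoint (T := fun j => Φ.ap fun x => z x j)
    (fun j => Φ.isFormalAdjoint (hzj j)) (fun j => h j ▸ Ψ.isFormalAdjoint (hzj j))
    (fun j => Φ.mem_graph_of_mul (hzj j) hr rfl _ (Φ.mem_domain (hzr j) (hbzr j) x))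
    (fun j => h j ▸ Ψ.mem_graph_of_mul (hzj j) hr rfl _ (Ψ.mem_domain (hzr j) (hbzr j) x))
    (fun j => Φ.mem_graph_of_mul (hzj j).conj (hzr j) rfl _ (Φ.mem_domain (hq j) (hbq j) x))
    (fun j => Ψ.mem_graph_of_mul (hzj j).conj (hzr j) rfl _ (Ψ.mem_domain (hq j) (hbq j) x)) ?_
  exact (Φ.ap_add_sum_apply_of_add_sum_eq_one hr hbr hq hbq hsum x).trans
    (Ψ.ap_add_sum_apply_of_add_sum_eq_one hr hbr hq hbq hsum x).symm

theorem ap_eq_of_agree_coord (hX : ‹MeasurableSpace X› = MeasurableSpace.comap z inferInstance)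
    (h : ∀ j, Φ.ap (fun x => z x j) = Ψ.ap fun x => z x j) (hf : Measurable f) :
    Φ.ap f = Ψ.ap f := by
  have hz : Measurable z := measurable_iff_comap_le.2 hX.ge
  have hr : Agree Φ Ψ fun x => ((oneAddSumNormSq (z x) : ℝ) : 𝕂)⁻¹ :=
    ⟨by fun_prop, ⟨1, fun x => norm_inv_oneAddSumNormSq_le_one _⟩, ap_inv_oneAddSumNormSq_eq hz h⟩
  refine ap_eq_of_agree_resolventCoords hX (fun k => ?_) hf
  cases k with
  | none => exact hr.2.2
  | some j =>
    have hdiv : ((fun x => z x j) * fun x => ((oneAddSumNormSq (z x) : ℝ) : 𝕂)⁻¹) =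
        fun x => resolventCoords (z x) (some j) := by
      funext x; exact (div_eq_mul_inv _ _).symm
    rw [← hdiv]
    exact (Agree.mul_of_eq (by fun_prop) (h j) hr
      ⟨1, fun x => norm_apply_mul_inv_oneAddSumNormSq_le_one (z x) j⟩).2.2

end CoordinateGenerators

end Uniqueness

end MeasFC

theorem mfc_uniqueness_on_borel_subset_of_Kd_general {d : ℕ} {Xs : Set (Fin d → 𝕜)}
    (Φ Ψ : MeasFC ↥Xs 𝕜 H) :
    -- (1)
    ((∀ j : Fin d, Φ.ap (fun x => (x : Fin d → 𝕜) j) = Ψ.ap (fun x => (x : Fin d → 𝕜) j)) →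
      ∀ f : ↥Xs → 𝕜, Measurable f → Φ.ap f = Ψ.ap f) ∧
    -- (2)
    (((∀ j : Fin d,
        Φ.ap (fun x => (x : Fin d → 𝕜) j / ((1 + ∑ i, ‖(x : Fin d → 𝕜) i‖ ^ 2 : ℝ) : 𝕜)) =
        Ψ.ap (fun x => (x : Fin d → 𝕜) j / ((1 + ∑ i, ‖(x : Fin d → 𝕜) i‖ ^ 2 : ℝ) : 𝕜))) ∧
      Φ.ap (fun x => (((1 + ∑ i, ‖(x : Fin d → 𝕜) i‖ ^ 2 : ℝ) : 𝕜))⁻¹) =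
        Ψ.ap (fun x => (((1 + ∑ i, ‖(x : Fin d → 𝕜) i‖ ^ 2 : ℝ) : 𝕜))⁻¹)) →
      ∀ f : ↥Xs → 𝕜, Measurable f → Φ.ap f = Ψ.ap f) ∧
    -- (3)
    ((∀ j : Fin d,
        Φ.ap (fun x => (x : Fin d → 𝕜) j /
          ((Real.sqrt (1 + ∑ i, ‖(x : Fin d → 𝕜) i‖ ^ 2) : ℝ) : 𝕜)) =
        Ψ.ap (fun x => (x : Fin d → 𝕜) j /
          ((Real.sqrt (1 + ∑ i, ‖(x : Fin d → 𝕜) i‖ ^ 2) : ℝ) : 𝕜))) →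
      ∀ f : ↥Xs → 𝕜, Measurable f → Φ.ap f = Ψ.ap f) := by
  -- The axioms of `MeasFC` are stated for the Borel structure `RCLike.measurableSpace`.
  obtain rfl : ‹MeasurableSpace 𝕜› = RCLike.measurableSpace := BorelSpace.measurable_eq
  refine ⟨fun h f hf => MeasFC.ap_eq_of_agree_coord (z := Subtype.val) rfl h hf,
    fun h f hf => MeasFC.ap_eq_of_agree_resolventCoords (z := Subtype.val) rfl ?_ hf,
    fun h f hf => MeasFC.ap_eq_of_agree_boundedTransform (z := Subtype.val) rfl h hf⟩
  rintro (_ | j)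
  exacts [h.2, h.1 j]

/-- Theorem 5.8: uniqueness of measurable calculi on a Borel subset `X ⊆ 𝕜^d`. Agreement on
(1) the coordinates, or (2) on `z_j/(1+|z|²)` and `1/(1+|z|²)`, or (3) on
`z_j/(1+|z|²)^{1/2}`, forces the two calculi to coincide. -/
theorem mfc_uniqueness_on_borel_subset_of_Kd {d : ℕ} {Xs : Set (Fin d → 𝕜)}
    (hXs : MeasurableSet Xs) (Φ Ψ : MeasFC ↥Xs 𝕜 H) :
    -- (1)
    ((∀ j : Fin d, Φ.ap (fun x => (x : Fin d → 𝕜) j) = Ψ.ap (fun x => (x : Fin d → 𝕜) j)) →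
      ∀ f : ↥Xs → 𝕜, Measurable f → Φ.ap f = Ψ.ap f) ∧
    -- (2)
    (((∀ j : Fin d,
        Φ.ap (fun x => (x : Fin d → 𝕜) j / ((1 + ∑ i, ‖(x : Fin d → 𝕜) i‖ ^ 2 : ℝ) : 𝕜)) =
        Ψ.ap (fun x => (x : Fin d → 𝕜) j / ((1 + ∑ i, ‖(x : Fin d → 𝕜) i‖ ^ 2 : ℝ) : 𝕜))) ∧
      Φ.ap (fun x => (((1 + ∑ i, ‖(x : Fin d → 𝕜) i‖ ^ 2 : ℝ) : 𝕜))⁻¹) =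
        Ψ.ap (fun x => (((1 + ∑ i, ‖(x : Fin d → 𝕜) i‖ ^ 2 : ℝ) : 𝕜))⁻¹)) →
      ∀ f : ↥Xs → 𝕜, Measurable f → Φ.ap f = Ψ.ap f) ∧
    -- (3)
    ((∀ j : Fin d,
        Φ.ap (fun x => (x : Fin d → 𝕜) j /
          ((Real.sqrt (1 + ∑ i, ‖(x : Fin d → 𝕜) i‖ ^ 2) : ℝ) : 𝕜)) =
        Ψ.ap (fun x => (x : Fin d → 𝕜) j /
          ((Real.sqrt (1 + ∑ i, ‖(x : Fin d → 𝕜) i‖ ^ 2) : ℝ) : 𝕜))) →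
      ∀ f : ↥Xs → 𝕜, Measurable f → Φ.ap f = Ψ.ap f) :=
  mfc_uniqueness_on_borel_subset_of_Kd_general Φ Ψ
end
end
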